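/- arXiv:1205.1006 — 9 statements merged into one kernel-verified Lean document; each statement's English description precedes it below -/
import Mathlib

section
/- Let K be a field of characteristic different from 2 and 3, and let E be the elliptic curve y^2 = (x-a)(x-b)(x-c) over K with a, b, c in K pairwise distinct. Given a point P = (x_0, y_0) in E(K), there exists Q in E(K) with P = 2Q if and only if x_0 - a, x_0 - b, and x_0 - c are all squares in K. -/
/-- The elliptic curve `y² = (x - a)(x - b)(x - c)` in Weierstrass (affine) form. -/
def cubicRootsCurve {K : Type*} [Field K] (a b c : K) : WeierstrassCurve.Affine K :=
  { a₁ := 0, a₂ := -(a + b + c), a₃ := 0, a₄ := a * b + b * c + c * a, a₆ := -(a * b * c) }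

/-!
A point `P = (x₀, y₀)` is a double exactly when `x₀` is the `x`-coordinate of the tangent doubling
of some point `(x, y)` with `y ≠ 0`: the double of `(x, y)` is then `P` or `-P`, and replacing
`(x, y)` by its negative fixes the sign. The doubling formula gives
`x₀ - a = (((x - a)² - (a - b)(a - c)) / 2y)²`, and symmetrically for `b` and `c`.
Conversely, if `x₀ - a = α²`, `x₀ - b = β²`, `x₀ - c = γ²`, then
`(x, y) = (x₀ + αβ + βγ + γα, (α + β)(β + γ)(γ + α))` lies on the curve, has `y ≠ 0` because the
roots are distinct, and its tangent meets the curve again above `x₀`.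
-/

namespace WeierstrassCurve.Affine.Point

variable {F : Type*} [Field F] [DecidableEq F] {W : WeierstrassCurve.Affine F}

lemma exists_two_smul_eq_some_iff {x₀ y₀ : F} (h₀ : W.Nonsingular x₀ y₀) :
    (∃ Q : W.Point, 2 • Q = some x₀ y₀ h₀) ↔
      ∃ x y, W.Nonsingular x y ∧ y ≠ W.negY x y ∧ W.addX x x (W.slope x x y y) = x₀ := by
  constructor
  · rintro ⟨_ | @⟨x, y, h⟩, hQ⟩
    · simp [← zero_def] at hQ
    · rw [two_smul] at hQ
      by_cases hy : y = W.negY x y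
      · rw [add_self_of_Y_eq hy] at hQ
        cases hQ
      · rw [add_self_of_Y_ne hy, some.injEq] at hQ
        exact ⟨x, y, h, hy, hQ.1⟩
  · rintro ⟨x, y, h, hy, rfl⟩
    obtain hP | hP := (X_eq_iff (h₁ := nonsingular_add h h fun hxy => hy hxy.2) (h₂ := h₀)).mp rfl
    · exact ⟨some x y h, by rw [two_smul, add_self_of_Y_ne hy, hP]⟩
    · exact ⟨-some x y h, by rw [two_smul, ← neg_add, add_self_of_Y_ne hy, hP, neg_neg]⟩

end WeierstrassCurve.Affine.Point

section CubicRootsCurve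

open WeierstrassCurve.Affine

variable {K : Type*} [Field K] {a b c x y : K}

lemma cubicRootsCurve_rotate (a b c : K) : cubicRootsCurve a b c = cubicRootsCurve b c a := by
  simp only [cubicRootsCurve]
  congr 1 <;> ring

lemma cubicRootsCurve_equation_iff :
    (cubicRootsCurve a b c).Equation x y ↔ y ^ 2 = (x - a) * (x - b) * (x - c) := by
  rw [equation_iff]
  simp only [cubicRootsCurve]
  constructor <;> intro h <;> linear_combination h

lemma cubicRootsCurve_negY : (cubicRootsCurve a b c).negY x y = -y := by
  simp [cubicRootsCurve, negY]

lemma cubicRootsCurve_Y_ne_negY_iff (h2 : (2 : K) ≠ 0) :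
    y ≠ (cubicRootsCurve a b c).negY x y ↔ y ≠ 0 := by
  rw [cubicRootsCurve_negY, ne_eq, eq_neg_iff_add_eq_zero, ← two_mul, mul_eq_zero]
  simp [h2]

lemma cubicRootsCurve_nonsingular (h2 : (2 : K) ≠ 0) (hy : y ≠ 0)
    (h : y ^ 2 = (x - a) * (x - b) * (x - c)) : (cubicRootsCurve a b c).Nonsingular x y := by
  rw [nonsingular_iff]
  refine ⟨cubicRootsCurve_equation_iff.mpr h, Or.inr fun hY => hy ?_⟩
  simp only [cubicRootsCurve] at hY
  exact (mul_eq_zero.mp (by linear_combination hY : 2 * y = 0)).resolve_left h2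

variable [DecidableEq K]

lemma cubicRootsCurve_addX_slope (hy : y ≠ (cubicRootsCurve a b c).negY x y) :
    (cubicRootsCurve a b c).addX x x ((cubicRootsCurve a b c).slope x x y y) =
      ((3 * x ^ 2 - 2 * (a + b + c) * x + (a * b + b * c + c * a)) / (2 * y)) ^ 2
        + (a + b + c) - 2 * x := by
  rw [slope_of_Y_ne rfl hy, cubicRootsCurve_negY]
  simp only [addX, cubicRootsCurve]
  ring

lemma cubicRootsCurve_addX_slope_sub (h2 : (2 : K) ≠ 0) (h : (cubicRootsCurve a b c).Equation x y)
    (hy : y ≠ (cubicRootsCurve a b c).negY x y) :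
    (cubicRootsCurve a b c).addX x x ((cubicRootsCurve a b c).slope x x y y) - a =
      (((x - a) ^ 2 - (a - b) * (a - c)) / (2 * y)) ^ 2 := by
  have hy0 := (cubicRootsCurve_Y_ne_negY_iff h2).mp hy
  rw [cubicRootsCurve_addX_slope hy]
  rw [cubicRootsCurve_equation_iff] at h
  field_simp
  linear_combination (4 * (b + c - 2 * x)) * h

lemma cubicRootsCurve_exists_addX_slope_eq (h2 : (2 : K) ≠ 0) (hab : a ≠ b) (hbc : b ≠ c)
    (hac : a ≠ c) {x₀ α β γ : K} (hα : x₀ - a = α * α) (hβ : x₀ - b = β * β)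
    (hγ : x₀ - c = γ * γ) :
    ∃ x y, (cubicRootsCurve a b c).Nonsingular x y ∧ y ≠ (cubicRootsCurve a b c).negY x y ∧
      (cubicRootsCurve a b c).addX x x ((cubicRootsCurve a b c).slope x x y y) = x₀ := by
  obtain rfl : a = x₀ - α * α := by linear_combination -hα
  obtain rfl : b = x₀ - β * β := by linear_combination -hβ
  obtain rfl : c = x₀ - γ * γ := by linear_combination -hγ
  have hαβ : α + β ≠ 0 := fun h => hab (by linear_combination (β - α) * h)
  have hβγ : β + γ ≠ 0 := fun h => hbc (by linear_combination (γ - β) * h)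
  have hγα : γ + α ≠ 0 := fun h => hac (by linear_combination (γ - α) * h)
  have hy0 : (α + β) * (β + γ) * (γ + α) ≠ 0 := mul_ne_zero (mul_ne_zero hαβ hβγ) hγα
  have hy := (cubicRootsCurve_Y_ne_negY_iff (a := x₀ - α * α) (b := x₀ - β * β)
    (c := x₀ - γ * γ) (x := x₀ + α * β + β * γ + γ * α) h2).mpr hy0
  refine ⟨_, _, cubicRootsCurve_nonsingular h2 hy0 (by ring), hy, ?_⟩
  rw [cubicRootsCurve_addX_slope hy]
  field_simp
  ring

end CubicRootsCurve

open Classical in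
theorem stmt_3_general {K : Type*} [Field K] (h2 : (2 : K) ≠ 0)
    (a b c : K) (hab : a ≠ b) (hbc : b ≠ c) (hac : a ≠ c)
    (x₀ y₀ : K) (hP : (cubicRootsCurve a b c).Nonsingular x₀ y₀) :
    (∃ Q : (cubicRootsCurve a b c).Point,
        2 • Q = WeierstrassCurve.Affine.Point.some x₀ y₀ hP) ↔
      IsSquare (x₀ - a) ∧ IsSquare (x₀ - b) ∧ IsSquare (x₀ - c) := by
  rw [WeierstrassCurve.Affine.Point.exists_two_smul_eq_some_iff]
  constructor
  · rintro ⟨x, y, hQ, hy, rfl⟩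
    refine ⟨cubicRootsCurve_addX_slope_sub h2 hQ.1 hy ▸ .sq _, ?_, ?_⟩
    · rw [cubicRootsCurve_rotate] at hQ hy ⊢
      exact cubicRootsCurve_addX_slope_sub h2 hQ.1 hy ▸ .sq _
    · rw [← cubicRootsCurve_rotate c] at hQ hy ⊢
      exact cubicRootsCurve_addX_slope_sub h2 hQ.1 hy ▸ .sq _
  · rintro ⟨⟨α, hα⟩, ⟨β, hβ⟩, ⟨γ, hγ⟩⟩
    exact cubicRootsCurve_exists_addX_slope_eq h2 hab hbc hac hα hβ hγ

open Classical in
theorem stmt_3 {K : Type*} [Field K] (h2 : (2 : K) ≠ 0) (h3 : (3 : K) ≠ 0)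
    (a b c : K) (hab : a ≠ b) (hbc : b ≠ c) (hac : a ≠ c)
    (x₀ y₀ : K) (hP : (cubicRootsCurve a b c).Nonsingular x₀ y₀) :
    (∃ Q : (cubicRootsCurve a b c).Point,
        2 • Q = WeierstrassCurve.Affine.Point.some x₀ y₀ hP) ↔
      IsSquare (x₀ - a) ∧ IsSquare (x₀ - b) ∧ IsSquare (x₀ - c) :=
  stmt_3_general h2 a b c hab hbc hac x₀ y₀ hP
end

section
/- Let p >= 5 be prime and for \lambda in F_p \ {0,1} define a_p(\lambda) := -\sum_{x in F_p} \phi(x(x-1)(x-\lambda)), where \phi is the Legendre symbol mod p with \phi(0)=0. Then \sum over \lambda in F_p \ {0,1} with \phi(\lambda)=1 of a_p(\lambda) equals -(1 + \phi(-1)). -/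
/-- The trace of Frobenius of the Legendre curve `y² = x(x-1)(x-λ)` over `𝔽_p`,
given as a character sum. -/
def apLegendre (p : ℕ) [Fact p.Prime] (lam : ZMod p) : ℤ :=
  -∑ x : ZMod p, quadraticChar (ZMod p) (x * (x - 1) * (x - lam))

section aux

variable {p : ℕ} [Fact p.Prime]

private lemma hchar (hp : 5 ≤ p) : ringChar (ZMod p) ≠ 2 := by
  rw [ZMod.ringChar_zmod_n]; omega

/-- shifted sum of quadratic character vanishes -/
private lemma sum_shift (hp : 5 ≤ p) (c : ZMod p) :
    ∑ x : ZMod p, quadraticChar (ZMod p) (c - x) = 0 := by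
  rw [← quadraticChar_sum_zero (hchar hp)]
  exact Fintype.sum_equiv (Equiv.subLeft c) _ _ (fun x => rfl)

private lemma sum_shift' (hp : 5 ≤ p) (c : ZMod p) :
    ∑ x : ZMod p, quadraticChar (ZMod p) (x - c) = 0 := by
  rw [← quadraticChar_sum_zero (hchar hp)]
  exact Fintype.sum_equiv (Equiv.subRight c) _ _ (fun x => rfl)

private lemma lemA (hp : 5 ≤ p) :
    ∑ x : ZMod p, quadraticChar (ZMod p) (x * (x - 1)) = -1 := by
  set χ := quadraticChar (ZMod p) with hχ
  have key : ∀ x : ZMod p,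
      χ (x⁻¹ * (x⁻¹ - 1)) = χ (1 - x) - (if x = 0 then 1 else 0) := by
    intro x
    by_cases hx : x = 0
    · simp [hx, hχ, quadraticChar_zero, map_one]
    · have h1 : x⁻¹ * (x⁻¹ - 1) = x⁻¹ ^ 2 * (1 - x) := by
        rw [sq]
        field_simp
      rw [if_neg hx, h1, map_mul, quadraticChar_sq_one' (inv_ne_zero hx)]
      ring
  have e : (∑ x : ZMod p, χ (x * (x - 1)))
      = ∑ x : ZMod p, χ (x⁻¹ * (x⁻¹ - 1)) := by
    exact Fintype.sum_equiv (Function.Involutive.toPerm _ (fun y : ZMod p => inv_inv y)) _ _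
      (fun x => by simp [Function.Involutive.toPerm])
  rw [e]
  simp only [key]
  rw [Finset.sum_sub_distrib, sum_shift hp,
    Finset.sum_ite_eq' Finset.univ (0 : ZMod p) (fun _ => (1 : ℤ))]
  simp

private lemma lemB (hp : 5 ≤ p) {a : ZMod p} (ha : a ≠ 0) :
    ∑ x : ZMod p, quadraticChar (ZMod p) (x * (a - x))
      = -(quadraticChar (ZMod p) (-1)) := by
  set χ := quadraticChar (ZMod p) with hχ
  have e : (∑ x : ZMod p, χ (x * (a - x)))
      = ∑ u : ZMod p, χ (u * (u - 1)) * χ (-1) := by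
    refine Fintype.sum_equiv (Equiv.mulLeft₀ a⁻¹ (inv_ne_zero ha)) _ _ (fun x => ?_)
    show χ (x * (a - x)) = χ (a⁻¹ * x * (a⁻¹ * x - 1)) * χ (-1)
    have harg : a⁻¹ * x * (a⁻¹ * x - 1) * (-1) = a⁻¹ ^ 2 * (x * (a - x)) := by
      rw [sq]
      field_simp
      ring
    rw [← map_mul, harg, map_mul χ (a⁻¹ ^ 2) (x * (a - x)), hχ,
      quadraticChar_sq_one' (inv_ne_zero ha), one_mul]
  rw [e, ← Finset.sum_mul, lemA hp, neg_one_mul]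

private lemma lemU1 (hp : 5 ≤ p) : ∑ lam : ZMod p, apLegendre p lam = 0 := by
  unfold apLegendre
  rw [Finset.sum_neg_distrib, Finset.sum_comm]
  rw [show (∑ x : ZMod p, ∑ lam : ZMod p,
      quadraticChar (ZMod p) (x * (x - 1) * (x - lam)))
    = ∑ x : ZMod p, quadraticChar (ZMod p) (x * (x - 1))
        * ∑ lam : ZMod p, quadraticChar (ZMod p) (x - lam) from by
      refine Finset.sum_congr rfl (fun x _ => ?_)
      rw [Finset.mul_sum]
      exact Finset.sum_congr rfl (fun lam _ => (map_mul _ _ _))]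
  simp only [sum_shift hp, mul_zero, Finset.sum_const_zero, neg_zero]

private lemma lemU2 (hp : 5 ≤ p) :
    ∑ lam : ZMod p, (quadraticChar (ZMod p) lam) * apLegendre p lam
    = -(quadraticChar (ZMod p) (-1)) := by
  set χ := quadraticChar (ZMod p) with hχ
  have step : ∀ lam : ZMod p, χ lam * apLegendre p lam
      = -∑ x : ZMod p, χ (x * (x - 1)) * χ (lam * (x - lam)) := by
    intro lam
    unfold apLegendre
    rw [mul_neg, neg_inj, Finset.mul_sum]
    refine Finset.sum_congr rfl (fun x _ => ?_)
    rw [hχ, ← map_mul, ← map_mul]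
    congr 1
    ring
  simp only [step]
  rw [Finset.sum_neg_distrib, Finset.sum_comm]
  have inner : ∀ x : ZMod p,
      (∑ lam : ZMod p, χ (x * (x - 1)) * χ (lam * (x - lam)))
      = χ (x * (x - 1)) * -(χ (-1)) := by
    intro x
    by_cases hx : x = 0
    · simp [hx, hχ, quadraticChar_zero]
    · rw [← Finset.mul_sum, lemB hp hx]
  simp only [inner]
  rw [← Finset.sum_mul, lemA hp]
  ring

private lemma ap_zero (hp : 5 ≤ p) :
    apLegendre p (0 : ZMod p) = quadraticChar (ZMod p) (-1) := by
  set χ := quadraticChar (ZMod p) with hχ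
  have key : ∀ x : ZMod p,
      χ (x * (x - 1) * (x - 0)) = χ (x - 1) - (if x = 0 then χ (-1) else 0) := by
    intro x
    by_cases hx : x = 0
    · simp [hx, hχ, quadraticChar_zero]
    · have h1 : x * (x - 1) * (x - 0) = x ^ 2 * (x - 1) := by ring
      rw [if_neg hx, h1, map_mul, quadraticChar_sq_one' hx]
      ring
  unfold apLegendre
  rw [show (∑ x : ZMod p, χ (x * (x - 1) * (x - 0)))
    = ∑ x : ZMod p, (χ (x - 1) - (if x = 0 then χ (-1) else 0)) from
      Finset.sum_congr rfl (fun x _ => key x)]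
  rw [Finset.sum_sub_distrib, sum_shift' hp,
    Finset.sum_ite_eq' Finset.univ (0 : ZMod p) (fun _ => χ (-1))]
  simp

private lemma ap_one (hp : 5 ≤ p) : apLegendre p (1 : ZMod p) = 1 := by
  set χ := quadraticChar (ZMod p) with hχ
  have key : ∀ x : ZMod p,
      χ (x * (x - 1) * (x - 1)) = χ x - (if x = 1 then 1 else 0) := by
    intro x
    by_cases hx : x = 1
    · simp [hx, hχ, quadraticChar_zero, map_one]
    · have hx' : x - 1 ≠ 0 := sub_ne_zero.mpr hx
      have h1 : x * (x - 1) * (x - 1) = (x - 1) ^ 2 * x := by ring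
      rw [if_neg hx, h1, map_mul, quadraticChar_sq_one' hx']
      ring
  unfold apLegendre
  rw [show (∑ x : ZMod p, χ (x * (x - 1) * (x - 1)))
    = ∑ x : ZMod p, (χ x - (if x = 1 then 1 else 0)) from
      Finset.sum_congr rfl (fun x _ => key x)]
  rw [Finset.sum_sub_distrib, quadraticChar_sum_zero (hchar hp),
    Finset.sum_ite_eq' Finset.univ (1 : ZMod p) (fun _ => (1 : ℤ))]
  simp

end aux

theorem stmt_9 (p : ℕ) [Fact p.Prime] (hp : 5 ≤ p) :
    ∑ lam ∈ Finset.univ.filter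
        (fun lam : ZMod p => lam ≠ 0 ∧ lam ≠ 1 ∧ quadraticChar (ZMod p) lam = 1),
      apLegendre p lam = -(1 + quadraticChar (ZMod p) (-1)) := by
  set χ := quadraticChar (ZMod p) with hχ
  set S := ∑ lam ∈ Finset.univ.filter
        (fun lam : ZMod p => lam ≠ 0 ∧ lam ≠ 1 ∧ χ lam = 1),
      apLegendre p lam with hS
  have htot : ∑ lam : ZMod p, (1 + χ lam) * apLegendre p lam = -(χ (-1)) := by
    have expand : ∀ lam : ZMod p, (1 + χ lam) * apLegendre p lam
        = apLegendre p lam + χ lam * apLegendre p lam := fun lam => by ring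
    simp only [expand]
    rw [Finset.sum_add_distrib, lemU1 hp, hχ, lemU2 hp, zero_add]
  have h01 : (0 : ZMod p) ≠ 1 := zero_ne_one
  have hG : ∑ lam ∈ Finset.univ.filter (fun lam : ZMod p => lam ≠ 0 ∧ lam ≠ 1),
      (1 + χ lam) * apLegendre p lam = -(χ (-1)) - χ (-1) - 2 := by
    have hsplit : (Finset.univ : Finset (ZMod p)) = insert 0 (insert 1
        (Finset.univ.filter (fun lam : ZMod p => lam ≠ 0 ∧ lam ≠ 1))) := by
      ext x
      by_cases h0 : x = 0 <;> by_cases h1 : x = 1 <;> simp [h0, h1]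
    have h1mem : (1 : ZMod p) ∉
        Finset.univ.filter (fun lam : ZMod p => lam ≠ 0 ∧ lam ≠ 1) := by simp
    have h0mem : (0 : ZMod p) ∉ insert 1
        (Finset.univ.filter (fun lam : ZMod p => lam ≠ 0 ∧ lam ≠ 1)) := by
      simp [h01]
    have h := htot
    rw [hsplit, Finset.sum_insert h0mem, Finset.sum_insert h1mem] at h
    have e0 : (1 + χ 0) * apLegendre p 0 = χ (-1) := by
      rw [hχ, quadraticChar_zero, ap_zero hp]; ring
    have e1 : (1 + χ 1) * apLegendre p 1 = 2 := by
      rw [hχ, map_one, ap_one hp]; ring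
    rw [e0, e1] at h
    linarith
  have h2S : 2 * S = ∑ lam ∈ Finset.univ.filter (fun lam : ZMod p => lam ≠ 0 ∧ lam ≠ 1),
      (1 + χ lam) * apLegendre p lam := by
    rw [hS, Finset.mul_sum]
    rw [show Finset.univ.filter (fun lam : ZMod p => lam ≠ 0 ∧ lam ≠ 1 ∧ χ lam = 1)
        = (Finset.univ.filter (fun lam : ZMod p => lam ≠ 0 ∧ lam ≠ 1)).filter
            (fun lam => χ lam = 1) from by
      ext a; simp [Finset.mem_filter, and_assoc]]
    rw [← Finset.sum_filter_add_sum_filter_not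
      (Finset.univ.filter (fun lam : ZMod p => lam ≠ 0 ∧ lam ≠ 1)) (fun lam => χ lam = 1)
      (fun lam => (1 + χ lam) * apLegendre p lam)]
    have hz : ∑ lam ∈ (Finset.univ.filter (fun lam : ZMod p => lam ≠ 0 ∧ lam ≠ 1)).filter
        (fun lam => ¬ χ lam = 1), (1 + χ lam) * apLegendre p lam = 0 := by
      refine Finset.sum_eq_zero (fun lam hlam => ?_)
      simp only [Finset.mem_filter, Finset.mem_univ, true_and] at hlam
      have hneg : χ lam = -1 := by
        rcases quadraticChar_dichotomy (F := ZMod p) hlam.1.1 with h | h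
        · exact absurd h hlam.2
        · exact h
      rw [hneg]; ring
    rw [hz, add_zero]
    refine Finset.sum_congr rfl (fun lam hlam => ?_)
    simp only [Finset.mem_filter, Finset.mem_univ, true_and] at hlam
    rw [hlam.2]; ring
  rw [hG] at h2S
  linarith
end

section
/- Let p be a prime with p \equiv 1 (mod 4), \chi_4 a multiplicative character of F_p^* of exact order 4 extended by \chi_4(0)=0, and \phi = \chi_4^2 the quadratic character. Define a_p(\lambda) := -\sum_{x in F_p} \phi(x(x-1)(x-\lambda)). Then \sum_{\lambda \in F_p \setminus \{0,1\}, \phi(\lambda(\lambda-1)) = -1} a_p(\lambda) \chi_4(\lambda(\lambda-1)) \phi(\lambda-1) = 0. -/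
lemma quadChar_neg_one' (p : ℕ) [Fact p.Prime] (hp : p % 4 = 1) :
    quadraticChar (ZMod p) (-1) = 1 := by
  have h2 : p ≠ 2 := by omega
  have hrc : ringChar (ZMod p) ≠ 2 := by
    rw [ZMod.ringChar_zmod_n]; exact h2
  refine (quadraticChar_one_iff_isSquare (neg_ne_zero.mpr one_ne_zero)).mpr ?_
  exact (ZMod.exists_sq_eq_neg_one_iff (p := p)).mpr (by omega)

lemma apLegendre_symm (p : ℕ) [Fact p.Prime] (hp : p % 4 = 1) (lam : ZMod p) :
    apLegendre p (1 - lam) = apLegendre p lam := by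
  unfold apLegendre
  congr 1
  refine Fintype.sum_equiv (Equiv.subLeft (1 : ZMod p)) _ _ fun x => ?_
  have : (1 - x) * (1 - x - 1) * (1 - x - lam) = -1 * (x * (x - 1) * (x - (1 - lam))) := by ring
  rw [Equiv.subLeft_apply]
  conv_rhs => rw [this, map_mul]
  rw [quadChar_neg_one' p hp, one_mul]

theorem stmt_10 (p : ℕ) [Fact p.Prime] (hp : p % 4 = 1) (χ₄ : MulChar (ZMod p) ℂ)
    (hord : orderOf χ₄ = 4)
    (hsq : χ₄ ^ 2 = (quadraticChar (ZMod p)).ringHomComp (Int.castRingHom ℂ)) :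
    ∑ lam ∈ Finset.univ.filter
        (fun lam : ZMod p =>
          lam ≠ 0 ∧ lam ≠ 1 ∧ quadraticChar (ZMod p) (lam * (lam - 1)) = -1),
      (apLegendre p lam : ℂ) * χ₄ (lam * (lam - 1)) *
        (quadraticChar (ZMod p) (lam - 1) : ℂ) = 0 := by
  refine Finset.sum_involution (fun a _ => 1 - a) ?_ ?_ ?_ ?_
  · -- f a + f (1 - a) = 0
    intro a ha
    simp only [Finset.mem_filter, Finset.mem_univ, true_and] at ha
    obtain ⟨h0, h1, hcond⟩ := ha
    have harg : (1 - a) * (1 - a - 1) = a * (a - 1) := by ring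
    have hap : apLegendre p (1 - a) = apLegendre p a := apLegendre_symm p hp a
    have hneg : quadraticChar (ZMod p) (1 - a - 1) = - quadraticChar (ZMod p) (a - 1) := by
      have h : (1 - a - 1) = -1 * a := by ring
      rw [h, map_mul, quadChar_neg_one' p hp, one_mul]
      -- χ(a) = -χ(a-1)
      have hm : quadraticChar (ZMod p) a * quadraticChar (ZMod p) (a - 1) = -1 := by
        rw [← map_mul]; exact hcond
      have hsq1 : quadraticChar (ZMod p) (a - 1) ^ 2 = 1 :=
        quadraticChar_sq_one (sub_ne_zero.mpr h1)
      have := congrArg (· * quadraticChar (ZMod p) (a - 1)) hm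
      simp only [mul_assoc, ← pow_two, hsq1, mul_one] at this
      linarith [this]
    rw [hap, harg, hneg]
    push_cast
    ring
  · -- g a ≠ a when f a ≠ 0
    intro a ha _
    simp only [Finset.mem_filter, Finset.mem_univ, true_and] at ha
    obtain ⟨h0, h1, hcond⟩ := ha
    intro heq
    have : a - 1 = -a := by linear_combination -heq
    have : a * (a - 1) = -1 * a ^ 2 := by rw [this]; ring
    rw [this, map_mul, quadChar_neg_one' p hp, one_mul, quadraticChar_sq_one' h0] at hcond
    norm_num at hcond
  · -- g a ∈ s
    intro a ha
    simp only [Finset.mem_filter, Finset.mem_univ, true_and] at ha ⊢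
    obtain ⟨h0, h1, hcond⟩ := ha
    refine ⟨sub_ne_zero.mpr (Ne.symm h1), fun h => h0 ?_, ?_⟩
    · linear_combination -h
    · rw [show (1 - a) * (1 - a - 1) = a * (a - 1) by ring]; exact hcond
  · intro a ha; ring
end

section
/- Let p be a prime with p \equiv 1 (mod 4), \chi_4 a character of F_p^* of order 4 (extended by 0 at 0), \phi the quadratic character. With a_p(\lambda) := -\sum_{x \in F_p} \phi(x(x-1)(x-\lambda)), one has \sum_{\lambda \ne 0,1, \phi(\lambda(\lambda-1))=1} a_p(\lambda) \chi_4(\lambda(\lambda-1)) \phi(\lambda-1) = \sum_{\lambda \ne 0,1, \phi(\lambda)=1} a_p(\lambda) \chi_4(\lambda) \phi(\lambda-1). -/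
namespace MulChar

variable {F R : Type*} [Field F] [CommRing R]

theorem map_div_sq (χ : MulChar F R) (x y : F) : χ (x / y ^ 2) = χ x * (χ ^ 2) y⁻¹ := by
  rw [div_eq_mul_inv, map_mul, ← inv_pow, map_pow, pow_apply' χ two_ne_zero]

end MulChar

section QuadraticChar

variable {F : Type*} [Field F] [Fintype F] [DecidableEq F]

theorem quadraticChar_inv (x : F) : quadraticChar F x⁻¹ = quadraticChar F x := by
  rw [← MulChar.inv_apply', (quadraticChar_isQuadratic F).inv]

theorem quadraticChar_div_sq (x : F) {y : F} (hy : y ≠ 0) :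
    quadraticChar F (x / y ^ 2) = quadraticChar F x := by
  rw [MulChar.map_div_sq, (quadraticChar_isQuadratic F).sq_eq_one, MulChar.one_apply
    (inv_ne_zero hy).isUnit, mul_one]

theorem MulChar.map_div_sq_of_sq_eq_quadraticChar {R : Type*} [CommRing R] (χ : MulChar F R)
    (hχ : χ ^ 2 = (quadraticChar F).ringHomComp (Int.castRingHom R)) (x y : F) :
    χ (x / y ^ 2) = χ x * quadraticChar F y := by
  rw [MulChar.map_div_sq, hχ, MulChar.ringHomComp_apply, quadraticChar_inv]
  rfl

end QuadraticChar

section Moebius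

variable {F : Type*} [Field F] {a : F}

theorem div_sub_one_ne_one (a : F) : a / (a - 1) ≠ 1 := by
  intro h
  have ha : a - 1 ≠ 0 := by rintro h'; simp [h'] at h
  rw [div_eq_one_iff_eq ha] at h
  exact one_ne_zero (by linear_combination h)

theorem div_sub_one_sub_one (ha : a ≠ 1) : a / (a - 1) - 1 = (a - 1)⁻¹ := by
  have := sub_ne_zero.2 ha
  field_simp
  ring

theorem div_sub_one_div_sub_one (ha : a ≠ 1) : a / (a - 1) / (a / (a - 1) - 1) = a := by
  rw [div_sub_one_sub_one ha, div_inv_eq_mul, div_mul_cancel₀ _ (sub_ne_zero.2 ha)]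

theorem div_sub_one_eq_mul_div_sq (ha : a ≠ 1) : a / (a - 1) = a * (a - 1) / (a - 1) ^ 2 := by
  rw [sq, mul_div_mul_right _ _ (sub_ne_zero.2 ha)]

theorem div_sub_one_mul_sub_one (ha : a ≠ 1) :
    a / (a - 1) * (a / (a - 1) - 1) = a / (a - 1) ^ 2 := by
  rw [div_sub_one_sub_one ha, sq, div_mul_eq_div_div, div_eq_mul_inv (a / (a - 1))]

end Moebius

section LegendreFamily

variable {F : Type*} [Field F] [Fintype F] [DecidableEq F]

theorem sum_quadraticChar_legendre_div_sub_one (hneg : quadraticChar F (-1) = 1) {a : F}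
    (ha : a ≠ 1) :
    ∑ x : F, quadraticChar F (x * (x - 1) * (x - a / (a - 1))) =
      quadraticChar F (a - 1) * ∑ v : F, quadraticChar F (v * (v - 1) * (v - a)) := by
  have ha' : a - 1 ≠ 0 := sub_ne_zero.2 ha
  let e : Equiv.Perm F := (Equiv.subLeft a).trans (Equiv.divRight₀ (a - 1) ha')
  rw [← Equiv.sum_comp e, Finset.mul_sum]
  refine Fintype.sum_congr _ _ fun v => ?_
  have hcubic : e v * (e v - 1) * (e v - a / (a - 1)) =
      -1 * (v * (v - 1) * (v - a) * (a - 1)) / ((a - 1) ^ 2) ^ 2 := by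
    simp only [e, Equiv.trans_apply, Equiv.subLeft_apply, Equiv.divRight₀_apply]
    field_simp
    ring
  rw [hcubic, quadraticChar_div_sq _ (pow_ne_zero 2 ha'), map_mul, map_mul, hneg, one_mul,
    mul_comm]

end LegendreFamily

theorem apLegendre_div_sub_one {p : ℕ} [Fact p.Prime] (hp : p % 4 = 1) {a : ZMod p}
    (ha : a ≠ 1) :
    apLegendre p (a / (a - 1)) = quadraticChar (ZMod p) (a - 1) * apLegendre p a := by
  have hneg : quadraticChar (ZMod p) (-1) = 1 := by
    rw [quadraticChar_one_iff_isSquare (neg_ne_zero.2 one_ne_zero)]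
    exact ZMod.exists_sq_eq_neg_one_iff.2 (by omega)
  rw [apLegendre, apLegendre, sum_quadraticChar_legendre_div_sub_one hneg ha, mul_neg]

theorem stmt_11_general (p : ℕ) [Fact p.Prime] (hp : p % 4 = 1) (χ₄ : MulChar (ZMod p) ℂ)
    (hsq : χ₄ ^ 2 = (quadraticChar (ZMod p)).ringHomComp (Int.castRingHom ℂ)) :
    ∑ lam ∈ Finset.univ.filter
        (fun lam : ZMod p =>
          lam ≠ 0 ∧ lam ≠ 1 ∧ quadraticChar (ZMod p) (lam * (lam - 1)) = 1),
      (apLegendre p lam : ℂ) * χ₄ (lam * (lam - 1)) *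
        (quadraticChar (ZMod p) (lam - 1) : ℂ) =
    ∑ lam ∈ Finset.univ.filter
        (fun lam : ZMod p => lam ≠ 0 ∧ lam ≠ 1 ∧ quadraticChar (ZMod p) lam = 1),
      (apLegendre p lam : ℂ) * χ₄ lam * (quadraticChar (ZMod p) (lam - 1) : ℂ) := by
  refine (Finset.sum_nbij' (fun a => a / (a - 1)) (fun a => a / (a - 1)) ?_ ?_ ?_ ?_ ?_).symm <;>
    simp only [Finset.mem_filter, Finset.mem_univ, true_and]
  · rintro a ⟨ha0, ha1, hφ⟩
    refine ⟨div_ne_zero ha0 (sub_ne_zero.2 ha1), div_sub_one_ne_one a, ?_⟩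
    rw [div_sub_one_mul_sub_one ha1, quadraticChar_div_sq _ (sub_ne_zero.2 ha1), hφ]
  · rintro a ⟨ha0, ha1, hφ⟩
    refine ⟨div_ne_zero ha0 (sub_ne_zero.2 ha1), div_sub_one_ne_one a, ?_⟩
    rw [div_sub_one_eq_mul_div_sq ha1, quadraticChar_div_sq _ (sub_ne_zero.2 ha1), hφ]
  · exact fun a ha => div_sub_one_div_sub_one ha.2.1
  · exact fun a ha => div_sub_one_div_sub_one ha.2.1
  · rintro a ⟨-, ha1, -⟩
    have hφ_sq : ((quadraticChar (ZMod p) (a - 1) : ℂ)) ^ 2 = 1 := by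
      exact_mod_cast quadraticChar_sq_one (sub_ne_zero.2 ha1)
    rw [apLegendre_div_sub_one hp ha1, div_sub_one_mul_sub_one ha1,
      χ₄.map_div_sq_of_sq_eq_quadraticChar hsq, div_sub_one_sub_one ha1, quadraticChar_inv]
    push_cast
    linear_combination (-(apLegendre p a : ℂ) * χ₄ a * quadraticChar (ZMod p) (a - 1)) * hφ_sq

theorem stmt_11 (p : ℕ) [Fact p.Prime] (hp : p % 4 = 1) (χ₄ : MulChar (ZMod p) ℂ)
    (hord : orderOf χ₄ = 4)
    (hsq : χ₄ ^ 2 = (quadraticChar (ZMod p)).ringHomComp (Int.castRingHom ℂ)) :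
    ∑ lam ∈ Finset.univ.filter
        (fun lam : ZMod p =>
          lam ≠ 0 ∧ lam ≠ 1 ∧ quadraticChar (ZMod p) (lam * (lam - 1)) = 1),
      (apLegendre p lam : ℂ) * χ₄ (lam * (lam - 1)) *
        (quadraticChar (ZMod p) (lam - 1) : ℂ) =
    ∑ lam ∈ Finset.univ.filter
        (fun lam : ZMod p => lam ≠ 0 ∧ lam ≠ 1 ∧ quadraticChar (ZMod p) lam = 1),
      (apLegendre p lam : ℂ) * χ₄ lam * (quadraticChar (ZMod p) (lam - 1) : ℂ) :=
  stmt_11_general p hp χ₄ hsq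
end

section
/- Let p be a prime with p \equiv 1 (mod 4), \chi_4 a character of F_p^* of order 4, \phi the quadratic character, and a_p(\lambda) := -\sum_{x \in F_p} \phi(x(x-1)(x-\lambda)). Then \sum over \lambda \ne 0,1 with \chi_4(\lambda)=1 and \phi(\lambda-1)=-1 of a_p(\lambda) equals \sum over \lambda \ne 0,1 with \phi(\lambda)=1, \chi_4(\lambda)=-1, and \phi(\lambda-1)=1 of a_p(\lambda). -/
/-!
Since `χ₄ (t²) = φ t`, the `λ` of the left-hand sum are exactly the squares `t²` of the
parameters `t` with `φ t = 1` and `φ (t² - 1) = -1`, and those of the right-hand sum the squares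
of the `t` with `φ t = -1` and `φ (t² - 1) = 1`; each `λ` arises from the two parameters `±t`.
Because `φ (-1) = 1`, the Cayley transform `t ↦ (1 - t)/(1 + t)` is an involution exchanging the
two parameter sets, and the 2-isogeny `E_{t²} → E_ψ`, `ψ = ((1 - t)/(1 + t))²`, shows that it
preserves `a_p(t²)`.
-/

open Finset

theorem sum_comp_sq_eq_two_nsmul_sum_image {R M : Type*} [CommRing R] [NoZeroDivisors R]
    [DecidableEq R] [AddCommMonoid M] (h2 : (2 : R) ≠ 0) {s : Finset R}
    (hneg : ∀ t ∈ s, -t ∈ s) (h0 : (0 : R) ∉ s) (g : R → M) :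
    ∑ t ∈ s, g (t ^ 2) = 2 • ∑ a ∈ s.image (· ^ 2), g a := by
  rw [smul_sum, eq_comm]
  refine sum_image' _ fun t ht => ?_
  have hne : t ≠ -t := fun h =>
    mul_ne_zero h2 (ne_of_mem_of_not_mem ht h0) (by linear_combination h)
  have hfiber : {x ∈ s | x ^ 2 = t ^ 2} = {t, -t} := by
    ext x
    simp only [mem_filter, mem_insert, mem_singleton, sq_eq_sq_iff_eq_or_eq_neg]
    constructor
    · exact And.right
    · rintro (rfl | rfl)
      exacts [⟨ht, .inl rfl⟩, ⟨hneg t ht, .inr rfl⟩]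
  rw [hfiber, sum_pair hne, neg_sq, two_nsmul]

section Field

variable {F : Type*} [Field F]

/-- For `λ = t²`, the Legendre curve 2-isogenous to `E_λ` is `E_ψ` with `ψ = cayley t ^ 2`. -/
def cayley (t : F) : F := (1 - t) / (1 + t)

theorem cayley_cayley (hF : ringChar F ≠ 2) {t : F} (ht : 1 + t ≠ 0) :
    cayley (cayley t) = t := by
  have h2 : (2 : F) ≠ 0 := Ring.two_ne_zero hF
  have hsub : 1 - cayley t = 2 * t / (1 + t) := by rw [cayley]; field_simp; ring
  have hadd : 1 + cayley t = 2 / (1 + t) := by rw [cayley]; field_simp; ring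
  rw [cayley, hsub, hadd]
  field_simp

end Field

section FiniteField

variable {F : Type*} [Field F] [Fintype F] [DecidableEq F]

theorem quadraticChar_sum_add_eq_zero (hF : ringChar F ≠ 2) (a : F) :
    ∑ x : F, quadraticChar F (x + a) = 0 := by
  rw [← quadraticChar_sum_zero hF]
  exact Fintype.sum_equiv (Equiv.addRight a) _ _ fun _ => rfl

/-- `x ↦ 2x - u` identifies the solutions of `x + B/x = u` with the square roots of `u² - 4B`. -/
theorem card_filter_add_mul_inv_eq (hF : ringChar F ≠ 2) {B : F} (hB : B ≠ 0) (u : F) :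
    (#{x ∈ univ.erase 0 | x + B * x⁻¹ = u} : ℤ) = 1 + quadraticChar F (u ^ 2 - 4 * B) := by
  have h2 : (2 : F) ≠ 0 := Ring.two_ne_zero hF
  rw [add_comm, ← quadraticChar_card_sqrts hF, Set.toFinset_ofPred]
  congr 1
  refine card_bij' (fun x _ => 2 * x - u) (fun z _ => (z + u) / 2) ?_ ?_ ?_ ?_
  · intro x hx
    obtain ⟨hx0, hxu⟩ := mem_filter.mp hx
    have hx0 : x ≠ 0 := ne_of_mem_erase hx0
    field_simp at hxu
    simp only [mem_filter, mem_univ, true_and]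
    linear_combination 4 * hxu
  · intro z hz
    have hz : z ^ 2 = u ^ 2 - 4 * B := (mem_filter.mp hz).2
    have hzu : z + u ≠ 0 := by
      rintro h
      rw [eq_neg_of_add_eq_zero_left h] at hz
      exact mul_ne_zero (mul_ne_zero h2 h2) hB (by linear_combination hz)
    refine mem_filter.mpr ⟨mem_erase.mpr ⟨div_ne_zero hzu h2, mem_univ _⟩, ?_⟩
    field_simp
    linear_combination hz
  · intro x _
    field_simp; ring
  · intro z _
    field_simp; ring

/-- The character-sum form of the 2-isogeny between `y² = x(x² + Ax + B)` and
`y² = x(x² - 2Ax + A² - 4B)`: both curves have the same number of points. -/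
theorem sum_quadraticChar_two_isogeny (hF : ringChar F ≠ 2) (A : F) {B : F} (hB : B ≠ 0) :
    ∑ x : F, quadraticChar F (x * (x ^ 2 + A * x + B)) =
      ∑ x : F, quadraticChar F (x * (x ^ 2 - 2 * A * x + (A ^ 2 - 4 * B))) := by
  calc ∑ x : F, quadraticChar F (x * (x ^ 2 + A * x + B))
      = ∑ x ∈ univ.erase 0, quadraticChar F (x + B * x⁻¹ + A) := by
        rw [← add_sum_erase _ _ (mem_univ 0)]
        simp only [zero_mul, quadraticChar_zero, zero_add]
        refine sum_congr rfl fun x hx => ?_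
        have hx0 : x ≠ 0 := ne_of_mem_erase hx
        rw [show x * (x ^ 2 + A * x + B) = x ^ 2 * (x + B * x⁻¹ + A) by field_simp; ring,
          map_mul, quadraticChar_sq_one' hx0, one_mul]
    _ = ∑ u : F, (#{x ∈ univ.erase 0 | x + B * x⁻¹ = u} : ℤ) * quadraticChar F (u + A) := by
        rw [← sum_fiberwise_of_maps_to' (g := fun x => x + B * x⁻¹)
          (f := fun u => quadraticChar F (u + A)) fun _ _ => mem_univ _]
        simp only [sum_const, nsmul_eq_mul]
    _ = ∑ u : F, quadraticChar F ((u ^ 2 - 4 * B) * (u + A)) := by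
        simp only [card_filter_add_mul_inv_eq hF hB, add_mul, one_mul, map_mul, sum_add_distrib,
          quadraticChar_sum_add_eq_zero hF, zero_add]
    _ = ∑ v : F, quadraticChar F (v * (v ^ 2 - 2 * A * v + (A ^ 2 - 4 * B))) :=
        Fintype.sum_equiv (Equiv.addRight A) _ _ fun u => by
          simp only [Equiv.coe_addRight]; ring_nf

section Quartic

variable {χ : MulChar F ℂ} (hsq : χ ^ 2 = (quadraticChar F).ringHomComp (Int.castRingHom ℂ))
include hsq

theorem MulChar.apply_sq_eq_quadraticChar (t : F) : χ (t ^ 2) = quadraticChar F t := by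
  rw [map_pow, ← MulChar.pow_apply' χ two_ne_zero, hsq]
  simp

theorem quadraticChar_eq_one_of_apply_eq_unit {a : F} {ε : ℤˣ} (h : χ a = (ε : ℤ)) :
    quadraticChar F a = 1 := by
  have h' := DFunLike.congr_fun hsq a
  rw [MulChar.pow_apply' χ two_ne_zero, h, MulChar.ringHomComp_apply, eq_intCast,
    ← Int.cast_pow, ← Units.val_pow_eq_pow_val, Int.units_sq, Units.val_one] at h'
  exact_mod_cast h'.symm

end Quartic

variable (F) in
def legendreParams (ε : ℤˣ) : Finset F :=
  univ.filter fun t => quadraticChar F t = ε ∧ quadraticChar F (t ^ 2 - 1) = -ε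

theorem ne_zero_of_mem_legendreParams {ε : ℤˣ} {t : F} (ht : t ∈ legendreParams F ε) :
    t ≠ 0 := by
  rintro rfl
  have := (mem_filter.mp ht).2.1
  rw [quadraticChar_zero] at this
  exact ε.ne_zero this.symm

theorem sq_sub_one_ne_zero_of_mem_legendreParams {ε : ℤˣ} {t : F}
    (ht : t ∈ legendreParams F ε) : t ^ 2 - 1 ≠ 0 := by
  intro h
  have := (mem_filter.mp ht).2.2
  rw [h, quadraticChar_zero, zero_eq_neg] at this
  exact ε.ne_zero this

theorem one_add_ne_zero_of_mem_legendreParams {ε : ℤˣ} {t : F}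
    (ht : t ∈ legendreParams F ε) : 1 + t ≠ 0 := fun h =>
  sq_sub_one_ne_zero_of_mem_legendreParams ht (by linear_combination (t - 1) * h)

theorem neg_mem_legendreParams (hneg1 : quadraticChar F (-1) = 1) {ε : ℤˣ} {t : F}
    (ht : t ∈ legendreParams F ε) : -t ∈ legendreParams F ε := by
  have hφ : quadraticChar F (-t) = quadraticChar F t := by
    rw [neg_eq_neg_one_mul, map_mul, hneg1, one_mul]
  simpa only [legendreParams, mem_filter, mem_univ, true_and, neg_sq, hφ] using ht

theorem image_sq_legendreParams {χ : MulChar F ℂ}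
    (hsq : χ ^ 2 = (quadraticChar F).ringHomComp (Int.castRingHom ℂ)) (ε : ℤˣ) :
    (legendreParams F ε).image (· ^ 2) =
      univ.filter fun a => a ≠ 0 ∧ a ≠ 1 ∧ χ a = (ε : ℤ) ∧ quadraticChar F (a - 1) = -ε := by
  ext a
  simp only [mem_image, mem_filter, mem_univ, true_and]
  constructor
  · rintro ⟨t, ht, rfl⟩
    refine ⟨pow_ne_zero 2 (ne_zero_of_mem_legendreParams ht),
      sub_ne_zero.mp (sq_sub_one_ne_zero_of_mem_legendreParams ht), ?_,
      (mem_filter.mp ht).2.2⟩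
    rw [MulChar.apply_sq_eq_quadraticChar hsq, (mem_filter.mp ht).2.1]
  · rintro ⟨ha0, -, hχ, hφ⟩
    obtain ⟨r, rfl⟩ := (quadraticChar_one_iff_isSquare ha0).mp
      (quadraticChar_eq_one_of_apply_eq_unit hsq hχ)
    rw [← sq] at hχ hφ
    rw [MulChar.apply_sq_eq_quadraticChar hsq] at hχ
    exact ⟨r, mem_filter.mpr ⟨mem_univ r, by exact_mod_cast hχ, hφ⟩, sq r⟩

theorem quadraticChar_cayley {t : F} (ht : 1 + t ≠ 0) :
    quadraticChar F (cayley t) = quadraticChar F (-1) * quadraticChar F (t ^ 2 - 1) := by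
  have h : cayley t = -1 * (t ^ 2 - 1) * (1 + t)⁻¹ ^ 2 := by rw [cayley]; field_simp; ring
  rw [h, map_mul, quadraticChar_sq_one' (inv_ne_zero ht), mul_one, map_mul]

theorem quadraticChar_cayley_sq_sub_one (hF : ringChar F ≠ 2) {t : F} (ht : 1 + t ≠ 0) :
    quadraticChar F (cayley t ^ 2 - 1) = quadraticChar F (-1) * quadraticChar F t := by
  have h2 : (2 : F) ≠ 0 := Ring.two_ne_zero hF
  have h : cayley t ^ 2 - 1 = -1 * t * (2 * (1 + t)⁻¹) ^ 2 := by rw [cayley]; field_simp; ring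
  rw [h, map_mul, quadraticChar_sq_one' (mul_ne_zero h2 (inv_ne_zero ht)), mul_one, map_mul]

theorem cayley_mem_legendreParams (hF : ringChar F ≠ 2) (hneg1 : quadraticChar F (-1) = 1)
    {ε : ℤˣ} {t : F} (ht : t ∈ legendreParams F ε) : cayley t ∈ legendreParams F (-ε) := by
  have ht1 := one_add_ne_zero_of_mem_legendreParams ht
  obtain ⟨-, hφt, hφt2⟩ := mem_filter.mp ht
  rw [legendreParams, mem_filter, quadraticChar_cayley ht1,
    quadraticChar_cayley_sq_sub_one hF ht1, hneg1, one_mul, one_mul, hφt, hφt2]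
  simp

end FiniteField

section Legendre

variable {p : ℕ} [Fact p.Prime]

theorem ZMod.ringChar_ne_two_of_mod_four_eq_one (hp : p % 4 = 1) : ringChar (ZMod p) ≠ 2 := by
  rw [ZMod.ringChar_zmod_n]; omega

theorem ZMod.quadraticChar_neg_one_of_mod_four_eq_one (hp : p % 4 = 1) :
    quadraticChar (ZMod p) (-1) = 1 := by
  rw [quadraticChar_one_iff_isSquare (neg_ne_zero.mpr one_ne_zero)]
  exact ZMod.exists_sq_eq_neg_one_iff.mpr (by omega)

/-- `E_{t²}` is 2-isogenous to `W : y² = x(x + (1 - t)²)(x + (1 + t)²)`, and `x ↦ -(1 + t)² x`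
turns `W` into the twist of `E_ψ`, `ψ = cayley t ^ 2`, by `-1`, which is a square. -/
theorem apLegendre_sq_eq_apLegendre_cayley_sq (hp : p % 4 = 1) {t : ZMod p} (ht0 : t ≠ 0)
    (ht : 1 + t ≠ 0) : apLegendre p (t ^ 2) = apLegendre p (cayley t ^ 2) := by
  set φ := quadraticChar (ZMod p)
  have hc : -(1 + t) ^ 2 ≠ 0 := neg_ne_zero.mpr (pow_ne_zero 2 ht)
  have hisog := sum_quadraticChar_two_isogeny (ZMod.ringChar_ne_two_of_mod_four_eq_one hp)
    (-(1 + t ^ 2)) (pow_ne_zero 2 ht0)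
  rw [apLegendre, apLegendre, neg_inj]
  calc ∑ x : ZMod p, φ (x * (x - 1) * (x - t ^ 2))
      = ∑ x : ZMod p, φ (x * (x ^ 2 + -(1 + t ^ 2) * x + t ^ 2)) := by
        refine sum_congr rfl fun x _ => congrArg φ ?_
        ring
    _ = ∑ x : ZMod p, φ ((-(1 + t) ^ 2 * x) * ((-(1 + t) ^ 2 * x) ^ 2
          - 2 * -(1 + t ^ 2) * (-(1 + t) ^ 2 * x) + ((-(1 + t ^ 2)) ^ 2 - 4 * t ^ 2))) := by
        rw [hisog]
        exact (Equiv.sum_comp (Equiv.mulLeft₀ _ hc)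
          fun y => φ (y * (y ^ 2 - 2 * -(1 + t ^ 2) * y + ((-(1 + t ^ 2)) ^ 2 - 4 * t ^ 2)))).symm
    _ = ∑ x : ZMod p, φ (-1 * (x * (x - 1) * (x - cayley t ^ 2)) * ((1 + t) ^ 3) ^ 2) := by
        refine sum_congr rfl fun x _ => congrArg φ ?_
        rw [cayley]
        field_simp
        ring
    _ = ∑ x : ZMod p, φ (x * (x - 1) * (x - cayley t ^ 2)) := by
        simp only [φ, map_mul, quadraticChar_sq_one' (pow_ne_zero 3 ht),
          ZMod.quadraticChar_neg_one_of_mod_four_eq_one hp, one_mul, mul_one]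

theorem sum_apLegendre_sq_legendreParams_neg (hp : p % 4 = 1) (ε : ℤˣ) :
    ∑ t ∈ legendreParams (ZMod p) (-ε), apLegendre p (t ^ 2) =
      ∑ t ∈ legendreParams (ZMod p) ε, apLegendre p (t ^ 2) := by
  have hF := ZMod.ringChar_ne_two_of_mod_four_eq_one hp
  have hneg1 := ZMod.quadraticChar_neg_one_of_mod_four_eq_one hp
  refine sum_nbij' cayley cayley
    (fun t ht => neg_neg ε ▸ cayley_mem_legendreParams hF hneg1 ht)
    (fun t ht => cayley_mem_legendreParams hF hneg1 ht)
    (fun t ht => cayley_cayley hF (one_add_ne_zero_of_mem_legendreParams ht))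
    (fun t ht => cayley_cayley hF (one_add_ne_zero_of_mem_legendreParams ht))
    (fun t ht => apLegendre_sq_eq_apLegendre_cayley_sq hp (ne_zero_of_mem_legendreParams ht)
      (one_add_ne_zero_of_mem_legendreParams ht))

theorem sum_apLegendre_sq_legendreParams_eq_two_nsmul (hp : p % 4 = 1) {χ : MulChar (ZMod p) ℂ}
    (hsq : χ ^ 2 = (quadraticChar (ZMod p)).ringHomComp (Int.castRingHom ℂ)) (ε : ℤˣ) :
    ∑ t ∈ legendreParams (ZMod p) ε, apLegendre p (t ^ 2) =
      2 • ∑ lam ∈ univ.filter (fun a : ZMod p => a ≠ 0 ∧ a ≠ 1 ∧ χ a = (ε : ℤ) ∧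
        quadraticChar (ZMod p) (a - 1) = -ε), apLegendre p lam := by
  rw [← image_sq_legendreParams hsq]
  exact sum_comp_sq_eq_two_nsmul_sum_image
    (Ring.two_ne_zero (ZMod.ringChar_ne_two_of_mod_four_eq_one hp))
    (fun _ => neg_mem_legendreParams (ZMod.quadraticChar_neg_one_of_mod_four_eq_one hp))
    (fun h => ne_zero_of_mem_legendreParams h rfl) _

end Legendre

theorem stmt_12_general (p : ℕ) [Fact p.Prime] (hp : p % 4 = 1) (χ₄ : MulChar (ZMod p) ℂ)
    (hsq : χ₄ ^ 2 = (quadraticChar (ZMod p)).ringHomComp (Int.castRingHom ℂ)) :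
    ∑ lam ∈ Finset.univ.filter
        (fun lam : ZMod p =>
          lam ≠ 0 ∧ lam ≠ 1 ∧ χ₄ lam = 1 ∧ quadraticChar (ZMod p) (lam - 1) = -1),
      apLegendre p lam =
    ∑ lam ∈ Finset.univ.filter
        (fun lam : ZMod p =>
          lam ≠ 0 ∧ lam ≠ 1 ∧ quadraticChar (ZMod p) lam = 1 ∧ χ₄ lam = -1 ∧
            quadraticChar (ZMod p) (lam - 1) = 1),
      apLegendre p lam := by
  have hrhs : univ.filter (fun a : ZMod p => a ≠ 0 ∧ a ≠ 1 ∧ quadraticChar (ZMod p) a = 1 ∧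
      χ₄ a = -1 ∧ quadraticChar (ZMod p) (a - 1) = 1) =
      univ.filter (fun a : ZMod p => a ≠ 0 ∧ a ≠ 1 ∧ χ₄ a = ((-1 : ℤˣ) : ℤ) ∧
        quadraticChar (ZMod p) (a - 1) = -((-1 : ℤˣ) : ℤ)) := by
    refine filter_congr fun a _ => ?_
    push_cast
    constructor
    · rintro ⟨h0, h1, -, h⟩
      exact ⟨h0, h1, h⟩
    · rintro ⟨h0, h1, hχ, h⟩
      refine ⟨h0, h1, quadraticChar_eq_one_of_apply_eq_unit hsq (ε := -1) ?_, hχ, h⟩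
      simpa using hχ
  have key : 2 • _ = 2 • _ :=
    (sum_apLegendre_sq_legendreParams_eq_two_nsmul hp hsq 1).symm.trans
      ((sum_apLegendre_sq_legendreParams_neg hp 1).symm.trans
        (sum_apLegendre_sq_legendreParams_eq_two_nsmul hp hsq (-1)))
  rw [hrhs]
  push_cast at key ⊢
  exact nsmul_right_injective two_ne_zero key

theorem stmt_12 (p : ℕ) [Fact p.Prime] (hp : p % 4 = 1) (χ₄ : MulChar (ZMod p) ℂ)
    (hord : orderOf χ₄ = 4)
    (hsq : χ₄ ^ 2 = (quadraticChar (ZMod p)).ringHomComp (Int.castRingHom ℂ)) :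
    ∑ lam ∈ Finset.univ.filter
        (fun lam : ZMod p =>
          lam ≠ 0 ∧ lam ≠ 1 ∧ χ₄ lam = 1 ∧ quadraticChar (ZMod p) (lam - 1) = -1),
      apLegendre p lam =
    ∑ lam ∈ Finset.univ.filter
        (fun lam : ZMod p =>
          lam ≠ 0 ∧ lam ≠ 1 ∧ quadraticChar (ZMod p) lam = 1 ∧ χ₄ lam = -1 ∧
            quadraticChar (ZMod p) (lam - 1) = 1),
      apLegendre p lam :=
  stmt_12_general p hp χ₄ hsq
end

section
/- Let p >= 5 be prime such that -1 is a square in F_p, and let \lambda in F_p \ {0,1} be a fourth power such that \lambda - 1 is not a square in F_p. Then the group E_\lambda(F_p) of F_p-points of the Legendre curve E_\lambda : y^2 = x(x-1)(x-\lambda) contains a subgroup isomorphic to Z/2Z x Z/8Z but contains no subgroup isomorphic to Z/4Z x Z/4Z. -/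
/-!
The `2`-torsion of `E_λ` is `{O, (0,0), (1,0), (λ,0)}`. By the duplication formula
`x(2P) = (x² - λ)² / (2y)²`, a point `P` with `2P = (1,0)` would make `1 - λ` a square, which it
is not, since `-1` is a square and `λ - 1` is not. So `(1,0)` is not a double; as a subgroup
`ℤ/4 × ℤ/4` would make every nonzero `2`-torsion point a double, there is none.

On the other hand `(0,0)` is divisible by `4`. Choose a fourth root `d` of `λ` with `d² - 1 = u²`
(one of `c, ic` works when `c⁴ = λ`, because `(c² - 1)((ic)² - 1) = 1 - λ` is not a square). Every
point with `x = d²` doubles to `(0,0)`, and the classical halving formula, fed with the square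
roots `d, u, idu` of `d², d² - 1, d² - λ`, produces a point doubling to one with `x = d²`. That
point has order `8`, and as `(1,0)` is not a double it generates, together with `(1,0)`, a
subgroup `ℤ/2 × ℤ/8`.
-/

/-- The Legendre curve `y² = x(x - 1)(x - λ)` in Weierstrass form. -/
def legendreCurve (K : Type*) [Field K] (lam : K) : WeierstrassCurve.Affine K :=
  { a₁ := 0, a₂ := -(1 + lam), a₃ := 0, a₄ := lam, a₆ := 0 }

open Function

theorem exists_injective_zmod_two_prod_zmod_eight {G : Type*} [AddCommGroup G] {T Q : G}
    (hT : 2 • T = 0) (hT_not_double : ∀ X : G, 2 • X ≠ T) (hQ : addOrderOf Q = 8) :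
    ∃ f : ZMod 2 × ZMod 8 →+ G, Injective f := by
  have hT₂ : (2 : ℤ) • T = 0 := mod_cast hT
  have hQ₈ : (8 : ℤ) • Q = 0 := by exact_mod_cast hQ ▸ addOrderOf_nsmul_eq_zero Q
  refine ⟨(ZMod.lift 2 ⟨zmultiplesHom G T, hT₂⟩).coprod (ZMod.lift 8 ⟨zmultiplesHom G Q, hQ₈⟩),
    ?_⟩
  rw [injective_iff_map_eq_zero]
  rintro ⟨m, n⟩ h
  obtain ⟨a, rfl⟩ := ZMod.intCast_surjective m
  obtain ⟨b, rfl⟩ := ZMod.intCast_surjective n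
  simp only [AddMonoidHom.coprod_apply, ZMod.lift_coe, zmultiplesHom_apply] at h
  have hQ_dvd {c : ℤ} (hc : c • Q = 0) : 8 ∣ c := by
    simpa [hQ] using addOrderOf_dvd_iff_zsmul_eq_zero.2 hc
  obtain ⟨k, rfl⟩ : (4 : ℤ) ∣ b := by
    have := hQ_dvd (c := 2 * b) (by linear_combination (norm := module) 2 • h - a • hT₂)
    omega
  rcases Int.even_or_odd a with ⟨j, rfl⟩ | ⟨j, rfl⟩
  · have := hQ_dvd (c := 4 * k) (by linear_combination (norm := module) h - j • hT₂)
    ext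
    · exact (ZMod.intCast_zmod_eq_zero_iff_dvd _ 2).2 ⟨j, by ring⟩
    · exact (ZMod.intCast_zmod_eq_zero_iff_dvd _ 8).2 (mod_cast this)
  · -- an odd multiple of `T` equals `T`, which would then be `2 • (-(2 * k) • Q)`
    exact absurd (by linear_combination (norm := module) -h + j • hT₂)
      (hT_not_double (-(2 * k) • Q))

theorem not_injective_zmod_four_prod_zmod_four {G : Type*} [AddCommGroup G] (A B : G)
    (h : ∀ X : G, 4 • X = 0 → 2 • X = 0 ∨ 2 • X = A ∨ 2 • X = B) (f : ZMod 4 × ZMod 4 →+ G) :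
    ¬Injective f := by
  classical
  intro hf
  set D := Finset.univ.image fun s : ZMod 4 × ZMod 4 ↦ 2 • s
  have hD : D.card = 4 := by decide
  have hsub : D.image f ⊆ {0, A, B} := by
    simp only [D, Finset.image_image, Finset.subset_iff, Finset.mem_image, Finset.mem_univ,
      true_and, Finset.mem_insert, Finset.mem_singleton, forall_exists_index,
      forall_apply_eq_imp_iff, comp_apply, map_nsmul]
    refine fun s ↦ h _ ?_
    rw [← map_nsmul, show 4 • s = 0 by revert s; decide, map_zero]
  have := (Finset.card_le_card hsub).trans Finset.card_le_three
  rw [Finset.card_image_of_injective _ hf, hD] at this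
  omega

theorem isSquare_mul_of_not_isSquare {F : Type*} [Field F] [Fintype F] {a b : F}
    (ha : ¬IsSquare a) (hb : ¬IsSquare b) : IsSquare (a * b) := by
  classical
  have hab : a * b ≠ 0 :=
    mul_ne_zero (by rintro rfl; exact ha IsSquare.zero) (by rintro rfl; exact hb IsSquare.zero)
  refine (quadraticChar_one_iff_isSquare hab).1 ?_
  rw [map_mul, quadraticChar_neg_one_iff_not_isSquare.2 ha,
    quadraticChar_neg_one_iff_not_isSquare.2 hb, neg_one_mul, neg_neg]

theorem exists_fourth_root_isSquare_sq_sub_one {F : Type*} [Field F] [Fintype F] {i c lam : F}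
    (hi : i ^ 2 = -1) (hc : c ^ 4 = lam) (hns : ¬IsSquare (lam - 1)) :
    ∃ d, d ^ 4 = lam ∧ IsSquare (d ^ 2 - 1) := by
  by_contra! h
  -- `(c² - 1)((ic)² - 1) = 1 - λ = i² (λ - 1)`, so one of the two factors is a square
  obtain ⟨s, hs⟩ := isSquare_mul_of_not_isSquare (h c hc)
    (h (i * c) (by linear_combination hc + (i ^ 2 - 1) * c ^ 4 * hi))
  exact hns ⟨i * s, by linear_combination -hs - hc + (c ^ 4 - c ^ 2 - s ^ 2) * hi⟩

namespace legendreCurve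

open WeierstrassCurve.Affine

variable {F : Type*} [Field F] {lam : F}

theorem equation_iff (x y : F) :
    (legendreCurve F lam).Equation x y ↔ y ^ 2 = x * (x - 1) * (x - lam) := by
  rw [WeierstrassCurve.Affine.equation_iff]
  simp only [legendreCurve]
  constructor <;> intro h <;> linear_combination h

theorem negY_eq (x y : F) : (legendreCurve F lam).negY x y = -y := by
  simp [negY, legendreCurve]

theorem Δ_eq : (legendreCurve F lam).Δ = 16 * lam ^ 2 * (lam - 1) ^ 2 := by
  simp only [legendreCurve, WeierstrassCurve.Δ, WeierstrassCurve.b₂, WeierstrassCurve.b₄,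
    WeierstrassCurve.b₆, WeierstrassCurve.b₈]
  ring

theorem nonsingular_iff (h2 : (2 : F) ≠ 0) (h0 : lam ≠ 0) (h1 : lam ≠ 1) {x y : F} :
    (legendreCurve F lam).Nonsingular x y ↔ y ^ 2 = x * (x - 1) * (x - lam) := by
  have hΔ : (legendreCurve F lam).Δ ≠ 0 := by
    rw [Δ_eq, show (16 : F) = 2 ^ 4 by norm_num]
    exact mul_ne_zero (mul_ne_zero (pow_ne_zero _ h2) (pow_ne_zero _ h0))
      (pow_ne_zero _ (sub_ne_zero.2 h1))
  rw [← equation_iff_nonsingular_of_Δ_ne_zero hΔ, equation_iff]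

theorem nonsingular_root (h2 : (2 : F) ≠ 0) (h0 : lam ≠ 0) (h1 : lam ≠ 1) {e : F}
    (he : e * (e - 1) * (e - lam) = 0) : (legendreCurve F lam).Nonsingular e 0 :=
  (nonsingular_iff h2 h0 h1).2 (by rw [he]; ring)

theorem y_eq_negY_iff (h2 : (2 : F) ≠ 0) {x y : F} :
    y = (legendreCurve F lam).negY x y ↔ y = 0 := by
  rw [negY_eq]
  refine ⟨fun h ↦ (mul_eq_zero.1 (by linear_combination h : 2 * y = 0)).resolve_left h2, ?_⟩
  rintro rfl
  exact neg_zero.symm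

variable [DecidableEq F]

theorem two_nsmul_some_eq_zero_iff (h2 : (2 : F) ≠ 0) {x y : F}
    (h : (legendreCurve F lam).Nonsingular x y) : 2 • Point.some x y h = 0 ↔ y = 0 := by
  rw [two_nsmul]
  by_cases hy : y = (legendreCurve F lam).negY x y
  · simpa [Point.add_self_of_Y_eq hy] using (y_eq_negY_iff h2).1 hy
  · simpa [Point.add_self_of_Y_ne hy, Point.some_ne_zero] using (y_eq_negY_iff h2).not.1 hy

theorem eq_of_two_nsmul_eq_zero (h2 : (2 : F) ≠ 0) (h0 : lam ≠ 0) (h1 : lam ≠ 1)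
    {P : (legendreCurve F lam).Point} (hP : 2 • P = 0) :
    P = 0 ∨ P = .some 0 0 (nonsingular_root h2 h0 h1 (by ring)) ∨
      P = .some 1 0 (nonsingular_root h2 h0 h1 (by ring)) ∨
      P = .some lam 0 (nonsingular_root h2 h0 h1 (by ring)) := by
  rcases P with _ | ⟨x, y, h⟩
  · exact Or.inl rfl
  obtain rfl := (two_nsmul_some_eq_zero_iff h2 h).1 hP
  have hx : x * (x - 1) * (x - lam) = 0 := by
    linear_combination -(nonsingular_iff h2 h0 h1).1 h
  rcases mul_eq_zero.1 hx with hx | hx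
  · rcases mul_eq_zero.1 hx with rfl | hx
    · exact Or.inr (Or.inl rfl)
    · obtain rfl := sub_eq_zero.1 hx
      exact Or.inr (Or.inr (Or.inl rfl))
  · obtain rfl := sub_eq_zero.1 hx
    exact Or.inr (Or.inr (Or.inr rfl))

theorem exists_two_nsmul_some_eq (h2 : (2 : F) ≠ 0) {x y : F}
    (h : (legendreCurve F lam).Nonsingular x y) (hy : y ≠ 0) :
    ∃ x' y' h', 2 • Point.some x y h = Point.some x' y' h' ∧
      x' * (2 * y) ^ 2 = (x ^ 2 - lam) ^ 2 := by
  have hy' : y ≠ (legendreCurve F lam).negY x y := (y_eq_negY_iff h2).not.2 hy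
  refine ⟨_, _, _, (two_nsmul _).trans (Point.add_self_of_Y_ne hy'), ?_⟩
  have hE := (equation_iff x y).1 h.1
  have hℓ : (legendreCurve F lam).slope x x y y * (2 * y) =
      3 * x ^ 2 - 2 * (1 + lam) * x + lam := by
    rw [slope_of_Y_ne rfl hy', negY_eq, sub_neg_eq_add, ← two_mul,
      div_mul_cancel₀ _ (mul_ne_zero h2 hy)]
    simp only [legendreCurve]
    ring
  rw [addX]
  generalize (legendreCurve F lam).slope x x y y = ℓ at hℓ ⊢
  simp only [legendreCurve]
  linear_combination (ℓ * (2 * y) + (3 * x ^ 2 - 2 * (1 + lam) * x + lam)) * hℓ +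
    (4 + 4 * lam - 8 * x) * hE

theorem isSquare_one_sub_of_two_nsmul_eq (h2 : (2 : F) ≠ 0) {P : (legendreCurve F lam).Point}
    {h : (legendreCurve F lam).Nonsingular 1 0} (hP : 2 • P = .some 1 0 h) :
    IsSquare (1 - lam) := by
  rcases P with _ | ⟨x, y, hxy⟩
  · rw [← Point.zero_def, smul_zero] at hP
    exact absurd hP.symm (Point.some_ne_zero h)
  by_cases hy : y = 0
  · subst hy
    rw [(two_nsmul_some_eq_zero_iff h2 hxy).2 rfl] at hP
    exact absurd hP.symm (Point.some_ne_zero h)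
  obtain ⟨x', y', h', hdouble, hx'⟩ := exists_two_nsmul_some_eq h2 hxy hy
  rw [hdouble] at hP
  injection hP with hx₁
  subst hx₁
  have hE := (equation_iff x y).1 hxy.1
  -- `x(2P) = 1` means `(x² - 2λx + λ)² = (1 - λ)(2y)²`
  refine ⟨(x ^ 2 - 2 * lam * x + lam) / (2 * y), ?_⟩
  field_simp
  linear_combination hx' - 4 * lam * hE

theorem two_nsmul_eq_some_zero_of_sq_eq (h2 : (2 : F) ≠ 0) (h0 : lam ≠ 0) (h1 : lam ≠ 1) {x y : F}
    (h : (legendreCurve F lam).Nonsingular x y) (hx : x ^ 2 = lam) :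
    2 • Point.some x y h = .some 0 0 (nonsingular_root h2 h0 h1 (by ring)) := by
  have hy : y ≠ 0 := by
    rintro rfl
    have : x ^ 2 * (x - 1) ^ 2 = 0 := by
      linear_combination (nonsingular_iff h2 h0 h1).1 h + (x ^ 2 - x) * hx
    rcases mul_eq_zero.1 this with h' | h'
    · exact h0 (by rw [← hx, pow_eq_zero_iff two_ne_zero |>.1 h', zero_pow two_ne_zero])
    · exact h1 (by rw [← hx, sub_eq_zero.1 (pow_eq_zero_iff two_ne_zero |>.1 h'), one_pow])
  obtain ⟨x', y', h', hdouble, hx'⟩ := exists_two_nsmul_some_eq h2 h hy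
  obtain rfl : x' = 0 := by
    rw [hx, sub_self, zero_pow two_ne_zero] at hx'
    exact (mul_eq_zero.1 hx').resolve_right (pow_ne_zero 2 (mul_ne_zero h2 hy))
  obtain rfl : y' = 0 := pow_eq_zero_iff two_ne_zero |>.1 <| by
    linear_combination (nonsingular_iff h2 h0 h1).1 h'
  exact hdouble

theorem exists_two_nsmul_eq_some_sq (h2 : (2 : F) ≠ 0) (h0 : lam ≠ 0) (h1 : lam ≠ 1)
    {r₁ r₂ r₃ : F} (h₁₂ : r₁ ^ 2 - r₂ ^ 2 = 1) (h₁₃ : r₁ ^ 2 - r₃ ^ 2 = lam) :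
    ∃ (H : (legendreCurve F lam).Point) (y : F)
      (h : (legendreCurve F lam).Nonsingular (r₁ ^ 2) y), 2 • H = .some (r₁ ^ 2) y h := by
  -- `H = (x, y)` with `x = r₁² + r₁r₂ + r₁r₃ + r₂r₃`, so that `x - e` factors for each root `e`
  have hx₁ : r₁ ^ 2 + r₁ * r₂ + r₁ * r₃ + r₂ * r₃ - 1 = (r₁ + r₂) * (r₂ + r₃) := by
    linear_combination h₁₂
  have hxl : r₁ ^ 2 + r₁ * r₂ + r₁ * r₃ + r₂ * r₃ - lam = (r₁ + r₃) * (r₂ + r₃) := by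
    linear_combination h₁₃
  have hH : (legendreCurve F lam).Nonsingular (r₁ ^ 2 + r₁ * r₂ + r₁ * r₃ + r₂ * r₃)
      ((r₁ + r₂) * (r₁ + r₃) * (r₂ + r₃)) :=
    (nonsingular_iff h2 h0 h1).2 (by rw [hx₁, hxl]; ring)
  have hy : (r₁ + r₂) * (r₁ + r₃) * (r₂ + r₃) ≠ 0 := by
    have h₁₂' : (r₁ + r₂) * (r₁ - r₂) ≠ 0 := by rw [← sq_sub_sq, h₁₂]; exact one_ne_zero
    have h₁₃' : (r₁ + r₃) * (r₁ - r₃) ≠ 0 := by rw [← sq_sub_sq, h₁₃]; exact h0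
    have h₂₃' : (r₂ + r₃) * (r₂ - r₃) ≠ 0 := by
      rw [← sq_sub_sq, show r₂ ^ 2 - r₃ ^ 2 = lam - 1 by linear_combination h₁₃ - h₁₂]
      exact sub_ne_zero.2 h1
    exact mul_ne_zero (mul_ne_zero (left_ne_zero_of_mul h₁₂') (left_ne_zero_of_mul h₁₃'))
      (left_ne_zero_of_mul h₂₃')
  obtain ⟨x', y', h', hdouble, hx'⟩ := exists_two_nsmul_some_eq h2 hH hy
  have hsq : (r₁ ^ 2 + r₁ * r₂ + r₁ * r₃ + r₂ * r₃) ^ 2 - lam =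
      2 * r₁ * ((r₁ + r₂) * (r₁ + r₃) * (r₂ + r₃)) := by
    linear_combination (r₁ ^ 2 - r₃ ^ 2) * h₁₂ + h₁₃
  obtain rfl : x' = r₁ ^ 2 := mul_right_cancel₀ (pow_ne_zero 2 (mul_ne_zero h2 hy))
    (by rw [hx', hsq]; ring)
  exact ⟨_, _, _, hdouble⟩

theorem exists_addOrderOf_eq_eight (h2 : (2 : F) ≠ 0) (h0 : lam ≠ 0) (h1 : lam ≠ 1) {i d u : F}
    (hi : i ^ 2 = -1) (hd : d ^ 4 = lam) (hu : u ^ 2 = d ^ 2 - 1) :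
    ∃ Q : (legendreCurve F lam).Point, addOrderOf Q = 8 := by
  obtain ⟨H, y, h, hH⟩ :=
    exists_two_nsmul_eq_some_sq h2 h0 h1 (r₁ := d) (r₂ := u) (r₃ := i * d * u)
    (by linear_combination -hu) (by linear_combination hd - d ^ 2 * u ^ 2 * hi + d ^ 2 * hu)
  have h4 : 2 ^ 2 • H = .some 0 0 (nonsingular_root h2 h0 h1 (by ring)) := by
    rw [pow_two, mul_nsmul, hH, two_nsmul_eq_some_zero_of_sq_eq h2 h0 h1 h (by rw [← hd]; ring)]
  refine ⟨H, addOrderOf_eq_prime_pow (p := 2) (n := 2) ?_ ?_⟩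
  · rw [h4]
    exact Point.some_ne_zero _
  · rw [pow_succ, mul_nsmul, h4, two_nsmul_some_eq_zero_iff h2]

theorem two_nsmul_eq_of_four_nsmul_eq_zero (h2 : (2 : F) ≠ 0) (h0 : lam ≠ 0) (h1 : lam ≠ 1)
    (hns : ¬IsSquare (1 - lam)) {P : (legendreCurve F lam).Point} (hP : 4 • P = 0) :
    2 • P = 0 ∨ 2 • P = .some 0 0 (nonsingular_root h2 h0 h1 (by ring)) ∨
      2 • P = .some lam 0 (nonsingular_root h2 h0 h1 (by ring)) := by
  rcases eq_of_two_nsmul_eq_zero h2 h0 h1 (P := 2 • P) (by rw [smul_smul]; exact hP)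
    with h | h | h | h
  · exact Or.inl h
  · exact Or.inr (Or.inl h)
  · exact absurd (isSquare_one_sub_of_two_nsmul_eq h2 h) hns
  · exact Or.inr (Or.inr h)

end legendreCurve

theorem stmt_13_general (p : ℕ) [Fact p.Prime] (hsq : IsSquare (-1 : ZMod p))
    (lam : ZMod p) (h0 : lam ≠ 0) (h1 : lam ≠ 1) (h4 : ∃ c : ZMod p, c ^ 4 = lam)
    (hns : ¬IsSquare (lam - 1)) :
    (∃ f : ZMod 2 × ZMod 8 →+ (legendreCurve (ZMod p) lam).Point, Function.Injective f) ∧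
      ¬∃ f : ZMod 4 × ZMod 4 →+ (legendreCurve (ZMod p) lam).Point, Function.Injective f := by
  obtain ⟨i, hi⟩ := hsq
  obtain ⟨c, hc⟩ := h4
  have hi2 : i ^ 2 = -1 := by rw [sq, hi]
  have h2 : (2 : ZMod p) ≠ 0 :=
    Ring.two_ne_zero fun hchar ↦ hns (FiniteField.isSquare_of_char_two hchar _)
  have hns' : ¬IsSquare (1 - lam) := fun ⟨r, hr⟩ ↦
    hns ⟨i * r, by linear_combination -hr - r ^ 2 * hi2⟩
  obtain ⟨d, hd, u, hu⟩ := exists_fourth_root_isSquare_sq_sub_one hi2 hc hns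
  obtain ⟨Q, hQ⟩ := legendreCurve.exists_addOrderOf_eq_eight h2 h0 h1 hi2 hd (by rw [hu, sq])
  have hT := (legendreCurve.two_nsmul_some_eq_zero_iff h2
    (legendreCurve.nonsingular_root h2 h0 h1 (e := 1) (by ring))).2 rfl
  refine ⟨exists_injective_zmod_two_prod_zmod_eight hT
    (fun X hX ↦ hns' (legendreCurve.isSquare_one_sub_of_two_nsmul_eq h2 hX)) hQ, ?_⟩
  rintro ⟨f, hf⟩
  exact not_injective_zmod_four_prod_zmod_four _ _
    (fun X hX ↦ legendreCurve.two_nsmul_eq_of_four_nsmul_eq_zero h2 h0 h1 hns' hX) f hf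

theorem stmt_13 (p : ℕ) [Fact p.Prime] (hp : 5 ≤ p) (hsq : IsSquare (-1 : ZMod p))
    (lam : ZMod p) (h0 : lam ≠ 0) (h1 : lam ≠ 1) (h4 : ∃ c : ZMod p, c ^ 4 = lam)
    (hns : ¬IsSquare (lam - 1)) :
    (∃ f : ZMod 2 × ZMod 8 →+ (legendreCurve (ZMod p) lam).Point, Function.Injective f) ∧
      ¬∃ f : ZMod 4 × ZMod 4 →+ (legendreCurve (ZMod p) lam).Point, Function.Injective f :=
  stmt_13_general p hsq lam h0 h1 h4 hns
end

section
/- Let p \equiv 1 (mod 4) be a prime with p >= 5, and let E be an elliptic curve over F_p such that E(F_p) contains a subgroup isomorphic to Z/2Z x Z/8Z but no subgroup isomorphic to Z/4Z x Z/4Z. Then E is isomorphic over F_p to the Legendre curve E_\lambda : y^2 = x(x-1)(x-\lambda) for some \lambda in F_p \ {0,1} such that \lambda is a fourth power in F_p and \lambda - 1 is not a square in F_p. -/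
open WeierstrassCurve WeierstrassCurve.Affine WeierstrassCurve.Affine.Point

namespace VCAux

variable {F : Type*} [Field F] [DecidableEq F] (W : WeierstrassCurve.Affine F) (C : WeierstrassCurve.VariableChange F)

def px (C : WeierstrassCurve.VariableChange F) (x : F) : F := (C.u : F) ^ 2 * x + C.r

def py (C : WeierstrassCurve.VariableChange F) (x y : F) : F :=
  (C.u : F) ^ 3 * y + (C.u : F) ^ 2 * C.s * x + C.t

lemma inv_u : ((C.u⁻¹ : Fˣ) : F) = ((C.u : F))⁻¹ := by simp

lemma px_injective : Function.Injective (px C) := fun a b h => by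
  have := C.u.ne_zero
  simp only [px, add_left_inj] at h
  exact mul_left_cancel₀ (pow_ne_zero 2 this) h

lemma key_eq (x y : F) :
    py C x y ^ 2 + W.a₁ * px C x * py C x y + W.a₃ * py C x y -
      (px C x ^ 3 + W.a₂ * px C x ^ 2 + W.a₄ * px C x + W.a₆) =
    (C.u : F) ^ 6 * (y ^ 2 + (C • W).a₁ * x * y + (C • W).a₃ * y -
      (x ^ 3 + (C • W).a₂ * x ^ 2 + (C • W).a₄ * x +
        (C • W).a₆)) := by
  simp only [variableChange_a₁, variableChange_a₂, variableChange_a₃, variableChange_a₄,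
    variableChange_a₆, inv_u, px, py]
  field_simp
  ring

lemma key_EY (x y : F) :
    2 * py C x y + W.a₁ * px C x + W.a₃ =
      (C.u : F) ^ 3 * (2 * y + (C • W).a₁ * x + (C • W).a₃) := by
  simp only [variableChange_a₁, variableChange_a₃, inv_u, px, py]
  field_simp
  ring

lemma key_EX (x y : F) :
    W.a₁ * py C x y - (3 * px C x ^ 2 + 2 * W.a₂ * px C x + W.a₄) =
      (C.u : F) ^ 4 * ((C • W).a₁ * y -
          (3 * x ^ 2 + 2 * (C • W).a₂ * x + (C • W).a₄)) -
        C.s * ((C.u : F) ^ 3 * (2 * y + (C • W).a₁ * x + (C • W).a₃)) := by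
  simp only [variableChange_a₁, variableChange_a₂, variableChange_a₃, variableChange_a₄, inv_u,
    px, py]
  field_simp
  ring

lemma vc_equation (x y : F) :
    (C • W).toAffine.Equation x y ↔ W.Equation (px C x) (py C x y) := by
  rw [equation_iff', equation_iff', key_eq W C x y, mul_eq_zero]
  simp [pow_eq_zero_iff, C.u.ne_zero]

lemma vc_nonsingular (x y : F) :
    (C • W).toAffine.Nonsingular x y ↔ W.Nonsingular (px C x) (py C x y) := by
  rw [nonsingular_iff', nonsingular_iff', ← vc_equation W C x y]
  refine and_congr_right fun _ => ?_
  have hu : (C.u : F) ≠ 0 := C.u.ne_zero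
  constructor
  · rintro (h | h)
    · by_cases h2 : 2 * y + (C • W).a₁ * x + (C • W).a₃ = 0
      · left
        rw [key_EX, h2, mul_zero, mul_zero, sub_zero]
        exact mul_ne_zero (pow_ne_zero _ hu) h
      · right
        rw [key_EY]
        exact mul_ne_zero (pow_ne_zero _ hu) h2
    · right
      rw [key_EY]
      exact mul_ne_zero (pow_ne_zero _ hu) h
  · rintro (h | h)
    · by_cases h2 : 2 * y + (C • W).a₁ * x + (C • W).a₃ = 0
      · left
        intro hc
        have hc' : (C • W).a₁ * y -
            (3 * x ^ 2 + 2 * (C • W).a₂ * x + (C • W).a₄) = 0 := hc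
        apply h
        rw [key_EX, h2, hc']
        ring
      · right; exact h2
    · right
      intro hc
      rw [key_EY, hc, mul_zero] at h
      exact h rfl

lemma vc_negY (x y : F) :
    W.negY (px C x) (py C x y) = py C x ((C • W).toAffine.negY x y) := by
  simp only [negY, variableChange_a₁, variableChange_a₃, inv_u, px, py]
  field_simp
  ring

lemma py_inj {x y y' : F} (h : py C x y = py C x y') : y = y' := by
  have := C.u.ne_zero
  simp only [py, add_left_inj] at h
  exact mul_left_cancel₀ (pow_ne_zero 3 this) h

lemma vc_slope {x₁ x₂ y₁ y₂ : F} (h₁ : (C • W).toAffine.Equation x₁ y₁)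
    (h₂ : (C • W).toAffine.Equation x₂ y₂)
    (hxy : ¬(x₁ = x₂ ∧ y₁ = (C • W).toAffine.negY x₂ y₂)) :
    W.slope (px C x₁) (px C x₂) (py C x₁ y₁) (py C x₂ y₂) =
      (C.u : F) * (C • W).toAffine.slope x₁ x₂ y₁ y₂ + C.s := by
  have hu : (C.u : F) ≠ 0 := C.u.ne_zero
  by_cases hx : x₁ = x₂
  · subst hx
    have hy : y₁ ≠ (C • W).toAffine.negY x₁ y₂ := fun h => hxy ⟨rfl, h⟩
    have hyy := Y_eq_of_Y_ne h₁ h₂ rfl hy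
    subst hyy
    have hy2 : py C x₁ y₁ ≠ W.negY (px C x₁) (py C x₁ y₁) := by
      rw [vc_negY]
      exact fun h => hy (py_inj C h)
    rw [slope_of_Y_ne rfl hy2, slope_of_Y_ne rfl hy]
    have hD : y₁ - (C • W).toAffine.negY x₁ y₁ ≠ 0 := sub_ne_zero.mpr hy
    have hd : py C x₁ y₁ - W.negY (px C x₁) (py C x₁ y₁) =
        (C.u : F) ^ 3 * (y₁ - (C • W).toAffine.negY x₁ y₁) := by
      rw [vc_negY]
      simp only [negY, variableChange_a₁, variableChange_a₃, inv_u, px, py]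
      field_simp
      ring
    rw [hd, ← mul_div_assoc, div_add' _ _ _ hD,
      div_eq_div_iff (mul_ne_zero (pow_ne_zero 3 hu) hD) hD]
    simp only [negY, variableChange_a₁, variableChange_a₂, variableChange_a₃, variableChange_a₄,
      inv_u, px, py]
    field_simp
    ring
  · have hx2 : px C x₁ ≠ px C x₂ := fun h => hx (px_injective C h)
    have h12 : px C x₁ - px C x₂ = (C.u : F) ^ 2 * (x₁ - x₂) := by
      simp only [px]; ring
    have hpy : py C x₁ y₁ - py C x₂ y₂ =
        (C.u : F) ^ 3 * (y₁ - y₂) + (C.u : F) ^ 2 * C.s * (x₁ - x₂) := by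
      simp only [py]; ring
    have hxx : x₁ - x₂ ≠ 0 := sub_ne_zero.mpr hx
    rw [slope_of_X_ne hx2, slope_of_X_ne hx, h12, hpy]
    field_simp

lemma vc_addX (x₁ x₂ L : F) :
    W.addX (px C x₁) (px C x₂) ((C.u : F) * L + C.s) =
      px C ((C • W).toAffine.addX x₁ x₂ L) := by
  simp only [addX, px, variableChange_a₁, variableChange_a₂, inv_u]
  field_simp
  ring

lemma vc_negAddY (x₁ x₂ y₁ L : F) :
    W.negAddY (px C x₁) (px C x₂) (py C x₁ y₁) ((C.u : F) * L + C.s) =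
      py C ((C • W).toAffine.addX x₁ x₂ L)
        ((C • W).toAffine.negAddY x₁ x₂ y₁ L) := by
  simp only [negAddY, addX, px, py, variableChange_a₁, variableChange_a₂, inv_u]
  field_simp
  ring

lemma vc_addY (x₁ x₂ y₁ L : F) :
    W.addY (px C x₁) (px C x₂) (py C x₁ y₁) ((C.u : F) * L + C.s) =
      py C ((C • W).toAffine.addX x₁ x₂ L)
        ((C • W).toAffine.addY x₁ x₂ y₁ L) := by
  rw [WeierstrassCurve.Affine.addY, vc_negAddY, vc_addX, vc_negY]
  rfl

lemma some_eq_some {W : WeierstrassCurve.Affine F} {x1 y1 x2 y2 : F} (hx : x1 = x2) (hy : y1 = y2)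
    {h1 : W.Nonsingular x1 y1} {h2 : W.Nonsingular x2 y2} : Point.some _ _ h1 = Point.some _ _ h2 := by
  subst hx; subst hy; rfl

def toFun : (C • W).toAffine.Point → W.Point
  | 0 => 0
  | Point.some _ _ h => Point.some _ _ ((vc_nonsingular W C _ _).mp h)

noncomputable def hom : (C • W).toAffine.Point →+ W.Point :=
  AddMonoidHom.mk' (toFun W C) (by
    rintro (_ | @⟨x₁, y₁, h₁⟩) (_ | @⟨x₂, y₂, h₂⟩)
    any_goals rfl
    by_cases hxy : x₁ = x₂ ∧ y₁ = (C • W).toAffine.negY x₂ y₂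
    · obtain ⟨hx, hy⟩ := hxy
      subst hx
      rw [add_of_Y_eq rfl hy]
      show (0 : W.Point) = toFun W C (Point.some _ _ h₁) + toFun W C (Point.some _ _ h₂)
      simp only [toFun]
      rw [add_of_Y_eq rfl (by rw [hy]; exact (vc_negY W C x₁ y₂).symm)]
    · have hxy' : px C x₁ = px C x₂ → py C x₁ y₁ ≠ W.negY (px C x₂) (py C x₂ y₂) := by
        intro hx hy
        have hx' := px_injective C hx
        subst hx'
        rw [vc_negY] at hy
        exact hxy ⟨rfl, py_inj C hy⟩
      rw [add_some hxy]
      show toFun W C _ = toFun W C (Point.some _ _ h₁) + toFun W C (Point.some _ _ h₂)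
      simp only [toFun]
      rw [add_some (fun h => hxy' h.1 h.2)]
      exact some_eq_some (by rw [vc_slope W C h₁.left h₂.left hxy, vc_addX])
        (by rw [vc_slope W C h₁.left h₂.left hxy, vc_addY]))

lemma hom_some {x y : F} (h : (C • W).toAffine.Nonsingular x y) :
    hom W C (Point.some _ _ h) = Point.some _ _ ((vc_nonsingular W C _ _).mp h) := rfl

lemma hom_injective : Function.Injective (hom W C) := by
  refine (injective_iff_map_eq_zero _).mpr ?_
  rintro (_ | @⟨x, y, h⟩) hP
  · rfl
  · exact absurd hP (some_ne_zero _)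

lemma hom_surjective : Function.Surjective (hom W C) := by
  have hu : (C.u : F) ≠ 0 := C.u.ne_zero
  rintro (_ | @⟨X, Y, h⟩)
  · exact ⟨0, rfl⟩
  · have hns : (C • W).toAffine.Nonsingular ((C.u : F)⁻¹ ^ 2 * (X - C.r))
        ((C.u : F)⁻¹ ^ 3 * (Y - C.s * (X - C.r) - C.t)) := by
      rw [vc_nonsingular]
      have hX : px C ((C.u : F)⁻¹ ^ 2 * (X - C.r)) = X := by
        simp only [px]; field_simp; ring
      have hY : py C ((C.u : F)⁻¹ ^ 2 * (X - C.r))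
          ((C.u : F)⁻¹ ^ 3 * (Y - C.s * (X - C.r) - C.t)) = Y := by
        simp only [py]; field_simp; ring
      rw [hX, hY]
      exact h
    refine ⟨Point.some _ _ hns, ?_⟩
    rw [hom_some]
    refine some_eq_some ?_ ?_
    · simp only [px]; field_simp; ring
    · simp only [py]; field_simp; ring

noncomputable def pointEquiv : (C • W).toAffine.Point ≃+ W.Point :=
  AddEquiv.ofBijective (hom W C) ⟨hom_injective W C, hom_surjective W C⟩

lemma pointEquiv_some {x y : F} (h : (C • W).toAffine.Nonsingular x y) :
    pointEquiv W C (Point.some _ _ h) = Point.some _ _ ((vc_nonsingular W C _ _).mp h) := rfl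

section CurveLemmas

variable {F : Type*} [Field F] [DecidableEq F] {W : WeierstrassCurve.Affine F} {a b : F}

lemma negY_eq (h1 : W.a₁ = 0) (h3 : W.a₃ = 0) (x y : F) : W.negY x y = -y := by
  rw [negY, h1, h3]; ring

lemma yzero_of_order_two (h1 : W.a₁ = 0) (h3 : W.a₃ = 0) (hchar : (2 : F) ≠ 0) {x y : F}
    (h : W.Nonsingular x y) (hT : Point.some _ _ h + Point.some _ _ h = 0) : y = 0 := by
  by_contra hy
  have hy' : y ≠ W.negY x y := by
    rw [negY_eq h1 h3]
    intro hc
    apply hy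
    have : 2 * y = 0 := by linear_combination hc
    rcases mul_eq_zero.mp this with h' | h'
    · exact absurd h' hchar
    · exact h'
  rw [add_self_of_Y_ne hy'] at hT
  exact some_ne_zero _ hT

lemma order_two_of_yzero (h1 : W.a₁ = 0) (h3 : W.a₃ = 0) {x : F}
    (h : W.Nonsingular x 0) : Point.some _ _ h + Point.some _ _ h = 0 :=
  add_of_Y_eq rfl (by rw [negY_eq h1 h3, _root_.neg_zero])

lemma curve_eq (h1 : W.a₁ = 0) (h3 : W.a₃ = 0) (h2 : W.a₂ = -(a+b)) (h4 : W.a₄ = a*b)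
    (h6 : W.a₆ = 0) {x y : F} (h : W.Equation x y) :
    y ^ 2 = x ^ 3 - (a + b) * x ^ 2 + a * b * x := by
  rw [equation_iff, h1, h2, h3, h4, h6] at h
  linear_combination h

lemma double_coords (h1 : W.a₁ = 0) (h3 : W.a₃ = 0) (h2 : W.a₂ = -(a+b)) (h4 : W.a₄ = a*b)
    (h6 : W.a₆ = 0) (hchar : (2 : F) ≠ 0) {x y x' y' : F} (hy : y ≠ 0)
    (h : W.Nonsingular x y) (h' : W.Nonsingular x' y')
    (hadd : Point.some _ _ h + Point.some _ _ h = Point.some _ _ h') :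
    x' * (2*y)^2 = (x^2 - a*b)^2 ∧
    (x' - a) * (2*y)^2 = ((x-a)^2 - a*(a-b))^2 ∧
    (x' - b) * (2*y)^2 = ((x-b)^2 - b*(b-a))^2 := by
  have hy' : y ≠ W.negY x y := by
    rw [negY_eq h1 h3]
    intro hc
    apply hy
    have h2y : 2 * y = 0 := by linear_combination hc
    rcases mul_eq_zero.mp h2y with hq | hq
    · exact absurd hq hchar
    · exact hq
  rw [add_self_of_Y_ne hy'] at hadd
  simp only [Point.some.injEq] at hadd
  obtain ⟨hx', -⟩ := hadd
  have heq : y ^ 2 = x ^ 3 - (a + b) * x ^ 2 + a * b * x := curve_eq h1 h3 h2 h4 h6 h.left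
  have h2y : y - W.negY x y ≠ 0 := sub_ne_zero.mpr hy'
  have h2yne : (2:F) * y ≠ 0 := mul_ne_zero hchar hy
  have hs : W.slope x x y y * (2*y) = 3*x^2 - 2*(a+b)*x + a*b := by
    rw [slope_of_Y_ne rfl hy', negY_eq h1 h3, h1, h2, h4,
      show y - -y = 2*y by ring, div_mul_cancel₀ _ h2yne]
    ring
  have hx2 : x' = W.slope x x y y ^ 2 + (a+b) - 2*x := by
    rw [← hx', addX, h1, h2]
    ring
  refine ⟨?_, ?_, ?_⟩
  · linear_combination (2*y)^2 * hx2 + (W.slope x x y y * (2*y) + (3*x^2 - 2*(a+b)*x + a*b)) * hs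
      + (4*((a+b)-2*x)) * heq
  · linear_combination (2*y)^2 * hx2 + (W.slope x x y y * (2*y) + (3*x^2 - 2*(a+b)*x + a*b)) * hs
      + (4*(b-2*x)) * heq
  · linear_combination (2*y)^2 * hx2 + (W.slope x x y y * (2*y) + (3*x^2 - 2*(a+b)*x + a*b)) * hs
      + (4*(a-2*x)) * heq

lemma halve (h1 : W.a₁ = 0) (h3 : W.a₃ = 0) (h2 : W.a₂ = -(a+b)) (h4 : W.a₄ = a*b)
    (h6 : W.a₆ = 0) (hchar : (2 : F) ≠ 0) (α β : F) (hα : α ≠ 0) (hβ : β ≠ 0)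
    (hαβ : α + β ≠ 0) (ha : a = α^2) (hb : b = α^2 - β^2) :
    ∃ (hR : W.Nonsingular (α^2 + α*β) (α*β*(α+β))) (hTa : W.Nonsingular a 0),
      Point.some _ _ hR + Point.some _ _ hR = Point.some _ _ hTa := by
  subst ha
  subst hb
  have hyR : α*β*(α+β) ≠ 0 := mul_ne_zero (mul_ne_zero hα hβ) hαβ
  have h2yR : (2:F) * (α*β*(α+β)) ≠ 0 := mul_ne_zero hchar hyR
  have hR : W.Nonsingular (α^2 + α*β) (α*β*(α+β)) := by
    rw [nonsingular_iff', equation_iff, h1, h2, h3, h4, h6]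
    constructor
    · ring
    · right
      intro hc
      exact h2yR (by linear_combination hc)
  have hTa : W.Nonsingular (α^2) 0 := by
    rw [nonsingular_iff', equation_iff, h1, h2, h3, h4, h6]
    constructor
    · ring
    · left
      intro hc
      have hab2 : (α * β)^2 = 0 := by linear_combination -hc
      exact absurd (pow_eq_zero_iff two_ne_zero |>.mp hab2) (mul_ne_zero hα hβ)
  refine ⟨hR, hTa, ?_⟩
  have hy' : α*β*(α+β) ≠ W.negY (α^2 + α*β) (α*β*(α+β)) := by
    rw [negY_eq h1 h3]
    intro hc
    exact h2yR (by linear_combination hc)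
  rw [add_self_of_Y_ne hy']
  have hsl : W.slope (α^2 + α*β) (α^2 + α*β) (α*β*(α+β)) (α*β*(α+β)) =
      (3*(α^2 + α*β)^2 - 2*(α^2+(α^2-β^2))*(α^2 + α*β) + α^2*(α^2-β^2)) / (2*(α*β*(α+β))) := by
    rw [slope_of_Y_ne rfl hy', negY_eq h1 h3, h1, h2, h4,
      show α*β*(α+β) - -(α*β*(α+β)) = 2*(α*β*(α+β)) by ring]
    ring_nf
  refine some_eq_some ?_ ?_
  · rw [addX, hsl, h1, h2]
    field_simp
    ring
  · rw [WeierstrassCurve.Affine.addY, negY_eq h1 h3, negAddY, addX, hsl, h1, h2]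
    field_simp
    ring

end CurveLemmas



lemma no44 {G : Type*} [AddCommGroup G] {Q R T₁ Ta : G}
    (hQ : (2:ℤ) • Q = T₁) (hR : (2:ℤ) • R = Ta) (h4Q : (4:ℤ) • Q = 0) (h4R : (4:ℤ) • R = 0)
    (h1 : T₁ ≠ 0) (h2 : Ta ≠ 0) (h3 : T₁ + Ta ≠ 0) :
    ∀ j k : ℤ, 0 ≤ j → j < 4 → 0 ≤ k → k < 4 → j • Q + k • R = 0 → j = 0 ∧ k = 0 := by
  intro j k h0j hj4 h0k hk4 h
  interval_cases j <;> interval_cases k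
  · exact ⟨rfl, rfl⟩
  · exfalso
    have e : Ta = (2:ℤ) • ((0:ℤ) • Q + (1:ℤ) • R) := by rw [← hR]; module
    rw [h, smul_zero] at e
    exact h2 e
  · exfalso
    have e : Ta = (0:ℤ) • Q + (2:ℤ) • R := by rw [← hR]; module
    rw [h] at e
    exact h2 e
  · exfalso
    have e : Ta = (2:ℤ) • ((0:ℤ) • Q + (3:ℤ) • R) - (4:ℤ) • R := by rw [← hR]; module
    rw [h, h4R, smul_zero, sub_zero] at e
    exact h2 e
  · exfalso
    have e : T₁ = (2:ℤ) • ((1:ℤ) • Q + (0:ℤ) • R) := by rw [← hQ]; module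
    rw [h, smul_zero] at e
    exact h1 e
  · exfalso
    have e : T₁ + Ta = (2:ℤ) • ((1:ℤ) • Q + (1:ℤ) • R) := by rw [← hQ, ← hR]; module
    rw [h, smul_zero] at e
    exact h3 e
  · exfalso
    have e : T₁ = (2:ℤ) • ((1:ℤ) • Q + (2:ℤ) • R) - (4:ℤ) • R := by rw [← hQ]; module
    rw [h, h4R, smul_zero, sub_zero] at e
    exact h1 e
  · exfalso
    have e : T₁ + Ta = (2:ℤ) • ((1:ℤ) • Q + (3:ℤ) • R) - (4:ℤ) • R := by
      rw [← hQ, ← hR]; module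
    rw [h, h4R, smul_zero, sub_zero] at e
    exact h3 e
  · exfalso
    have e : T₁ = (2:ℤ) • Q + (0:ℤ) • R := by rw [← hQ]; module
    rw [h] at e
    exact h1 e
  · exfalso
    have e : Ta = (2:ℤ) • ((2:ℤ) • Q + (1:ℤ) • R) - (4:ℤ) • Q := by rw [← hR]; module
    rw [h, h4Q, smul_zero, sub_zero] at e
    exact h2 e
  · exfalso
    have e : T₁ + Ta = (2:ℤ) • Q + (2:ℤ) • R := by rw [← hQ, ← hR]
    rw [h] at e
    exact h3 e
  · exfalso
    have e : Ta = (2:ℤ) • ((2:ℤ) • Q + (3:ℤ) • R) - (4:ℤ) • Q - (4:ℤ) • R := by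
      rw [← hR]; module
    rw [h, h4Q, h4R, smul_zero, sub_zero, sub_zero] at e
    exact h2 e
  · exfalso
    have e : T₁ = (2:ℤ) • ((3:ℤ) • Q + (0:ℤ) • R) - (4:ℤ) • Q := by rw [← hQ]; module
    rw [h, h4Q, smul_zero, sub_zero] at e
    exact h1 e
  · exfalso
    have e : T₁ + Ta = (2:ℤ) • ((3:ℤ) • Q + (1:ℤ) • R) - (4:ℤ) • Q := by
      rw [← hQ, ← hR]; module
    rw [h, h4Q, smul_zero, sub_zero] at e
    exact h3 e
  · exfalso
    have e : T₁ = (2:ℤ) • ((3:ℤ) • Q + (2:ℤ) • R) - (4:ℤ) • Q - (4:ℤ) • R := by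
      rw [← hQ]; module
    rw [h, h4Q, h4R, smul_zero, sub_zero, sub_zero] at e
    exact h1 e
  · exfalso
    have e : T₁ + Ta = (2:ℤ) • ((3:ℤ) • Q + (3:ℤ) • R) - (4:ℤ) • Q - (4:ℤ) • R := by
      rw [← hQ, ← hR]; module
    rw [h, h4Q, h4R, smul_zero, sub_zero, sub_zero] at e
    exact h3 e


end VCAux

set_option maxRecDepth 8000 in
open VCAux in
theorem stmt_14 (p : ℕ) [Fact p.Prime] (hp : 5 ≤ p) (hp4 : p % 4 = 1)
    (W : WeierstrassCurve.Affine (ZMod p)) [W.IsElliptic]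
    (h28 : ∃ f : ZMod 2 × ZMod 8 →+ W.Point, Function.Injective f)
    (h44 : ¬∃ f : ZMod 4 × ZMod 4 →+ W.Point, Function.Injective f) :
    ∃ lam : ZMod p, lam ≠ 0 ∧ lam ≠ 1 ∧ (∃ c : ZMod p, c ^ 4 = lam) ∧
      ¬IsSquare (lam - 1) ∧
      ∃ C : WeierstrassCurve.VariableChange (ZMod p),
        C • W = legendreCurve (ZMod p) lam := by
  obtain ⟨f, hf⟩ := h28
  have hp2 : (2 : ZMod p) ≠ 0 := by
    intro hc
    rw [show (2 : ZMod p) = ((2:ℕ) : ZMod p) by push_cast; ring,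
      ZMod.natCast_eq_zero_iff] at hc
    have := Nat.le_of_dvd two_pos hc
    omega
  have hm1 : IsSquare (-1 : ZMod p) := by
    rw [ZMod.exists_sq_eq_neg_one_iff]
    omega
  letI : Invertible (2 : ZMod p) := invertibleOfNonzero hp2
  set C₀ := WeierstrassCurve.toCharNeTwoNF W with hC₀
  set A := C₀ • W with hA
  set f₀ : ZMod 2 × ZMod 8 →+ A.toAffine.Point :=
    (pointEquiv W C₀).symm.toAddMonoidHom.comp f with hf₀def
  have hf₀ : Function.Injective f₀ := by
    rw [hf₀def]
    intro u v huv
    exact hf ((pointEquiv W C₀).symm.injective huv)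
  have ha₁₀ : A.a₁ = 0 := A.a₁_of_isCharNeTwoNF
  have ha₃₀ : A.a₃ = 0 := A.a₃_of_isCharNeTwoNF
  have hT2 : f₀ (0, 4) + f₀ (0, 4) = 0 := by
    rw [← _root_.map_add, show ((0,4) : ZMod 2 × ZMod 8) + (0,4) = 0 by decide, _root_.map_zero]
  have hTne : f₀ (0, 4) ≠ 0 := by
    intro hc
    have h9 : f₀ (0, 4) = f₀ 0 := by rw [_root_.map_zero]; exact hc
    exact absurd (hf₀ h9) (by decide)
  obtain ⟨x₀, y₀, hns₀, hTdef⟩ : ∃ x y h, f₀ (0, 4) = Point.some _ _ h := by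
    rcases hT : f₀ (0, 4) with _ | @⟨x, y, hns⟩
    · exact absurd hT hTne
    · exact ⟨x, y, hns, rfl⟩
  have hy₀ : y₀ = 0 := yzero_of_order_two ha₁₀ ha₃₀ hp2 hns₀ (by rw [← hTdef]; exact hT2)
  subst hy₀
  have hT2b : f₀ (1, 0) + f₀ (1, 0) = 0 := by
    rw [← _root_.map_add, show ((1,0) : ZMod 2 × ZMod 8) + (1,0) = 0 by decide, _root_.map_zero]
  have hTneb : f₀ (1, 0) ≠ 0 := by
    intro hc
    have h9 : f₀ (1, 0) = f₀ 0 := by rw [_root_.map_zero]; exact hc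
    exact absurd (hf₀ h9) (by decide)
  obtain ⟨x₂', y₂', hns₂, hT2def⟩ : ∃ x y h, f₀ (1, 0) = Point.some _ _ h := by
    rcases hT : f₀ (1, 0) with _ | @⟨x, y, hns⟩
    · exact absurd hT hTneb
    · exact ⟨x, y, hns, rfl⟩
  have hy₂ : y₂' = 0 := yzero_of_order_two ha₁₀ ha₃₀ hp2 hns₂ (by rw [← hT2def]; exact hT2b)
  subst hy₂
  have hT2c : f₀ (1, 4) + f₀ (1, 4) = 0 := by
    rw [← _root_.map_add, show ((1,4) : ZMod 2 × ZMod 8) + (1,4) = 0 by decide, _root_.map_zero]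
  have hTnec : f₀ (1, 4) ≠ 0 := by
    intro hc
    have h9 : f₀ (1, 4) = f₀ 0 := by rw [_root_.map_zero]; exact hc
    exact absurd (hf₀ h9) (by decide)
  obtain ⟨x₃', y₃', hns₃, hT3def⟩ : ∃ x y h, f₀ (1, 4) = Point.some _ _ h := by
    rcases hT : f₀ (1, 4) with _ | @⟨x, y, hns⟩
    · exact absurd hT hTnec
    · exact ⟨x, y, hns, rfl⟩
  have hy₃ : y₃' = 0 := yzero_of_order_two ha₁₀ ha₃₀ hp2 hns₃ (by rw [← hT3def]; exact hT2c)
  subst hy₃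
  have hx02 : x₀ ≠ x₂' := by
    intro hc
    have : f₀ (0, 4) = f₀ (1, 0) := by rw [hTdef, hT2def]; exact some_eq_some hc rfl
    exact absurd (hf₀ this) (by decide)
  have hx03 : x₀ ≠ x₃' := by
    intro hc
    have : f₀ (0, 4) = f₀ (1, 4) := by rw [hTdef, hT3def]; exact some_eq_some hc rfl
    exact absurd (hf₀ this) (by decide)
  have hx23 : x₂' ≠ x₃' := by
    intro hc
    have : f₀ (1, 0) = f₀ (1, 4) := by rw [hT2def, hT3def]; exact some_eq_some hc rfl
    exact absurd (hf₀ this) (by decide)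
  set C₁ : WeierstrassCurve.VariableChange (ZMod p) := ⟨1, x₀, 0, 0⟩ with hC₁
  set B := C₁ • A with hB
  set f₁ : ZMod 2 × ZMod 8 →+ B.toAffine.Point :=
    (pointEquiv A C₁).symm.toAddMonoidHom.comp f₀ with hf₁def
  have hf₁ : Function.Injective f₁ := by
    rw [hf₁def]
    intro u v huv
    exact hf₀ ((pointEquiv A C₁).symm.injective huv)
  set aa := x₂' - x₀ with haadef
  set bb := x₃' - x₀ with hbbdef
  have haa : aa ≠ 0 := sub_ne_zero.mpr (Ne.symm hx02)
  have hbb : bb ≠ 0 := sub_ne_zero.mpr (Ne.symm hx03)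
  have hab : aa ≠ bb := by
    intro hc
    apply hx23
    have := congrArg (fun z => z + x₀) hc
    simpa [haadef, hbbdef] using this
  have hb1 : B.a₁ = 0 := by
    rw [hB, variableChange_a₁, ha₁₀, hC₁]
    simp
  have hb3 : B.a₃ = 0 := by
    rw [hB, variableChange_a₃, ha₁₀, ha₃₀, hC₁]
    simp
  have hpx0 : px C₁ 0 = x₀ := by simp [px, hC₁]
  have hpy0 : py C₁ 0 0 = 0 := by simp [py, hC₁]
  have h00 : B.toAffine.Nonsingular 0 0 := by
    rw [hB]
    refine (vc_nonsingular A C₁ 0 0).mpr ?_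
    rw [hpx0, hpy0]
    exact hns₀
  have hpxa : px C₁ aa = x₂' := by simp [px, hC₁, haadef]
  have hpya : py C₁ aa 0 = 0 := by simp [py, hC₁]
  have ha0 : B.toAffine.Nonsingular aa 0 := by
    rw [hB]
    refine (vc_nonsingular A C₁ aa 0).mpr ?_
    rw [hpxa, hpya]
    exact hns₂
  have hpxb : px C₁ bb = x₃' := by simp [px, hC₁, hbbdef]
  have hpyb : py C₁ bb 0 = 0 := by simp [py, hC₁]
  have hb0 : B.toAffine.Nonsingular bb 0 := by
    rw [hB]
    refine (vc_nonsingular A C₁ bb 0).mpr ?_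
    rw [hpxb, hpyb]
    exact hns₃
  have hT₁ : f₁ (0, 4) = Point.some _ _ h00 := by
    rw [hf₁def, AddMonoidHom.comp_apply]
    simp only [AddEquiv.coe_toAddMonoidHom]
    rw [AddEquiv.symm_apply_eq]
    rw [hTdef, VCAux.pointEquiv_some]
    exact (some_eq_some hpx0 hpy0).symm
  have hTA : f₁ (1, 0) = Point.some _ _ ha0 := by
    rw [hf₁def, AddMonoidHom.comp_apply]
    simp only [AddEquiv.coe_toAddMonoidHom]
    rw [AddEquiv.symm_apply_eq]
    rw [hT2def, VCAux.pointEquiv_some]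
    exact (some_eq_some hpxa hpya).symm
  have hb6 : B.a₆ = 0 := by
    have := h00.left
    rw [equation_iff] at this
    linear_combination -this
  have eqa : aa^3 + B.a₂ * aa^2 + B.a₄ * aa = 0 := by
    have := ha0.left
    rw [equation_iff, hb1, hb3, hb6] at this
    linear_combination -this
  have eqb : bb^3 + B.a₂ * bb^2 + B.a₄ * bb = 0 := by
    have := hb0.left
    rw [equation_iff, hb1, hb3, hb6] at this
    linear_combination -this
  have e1 : aa^2 + B.a₂ * aa + B.a₄ = 0 := by
    apply mul_left_cancel₀ haa
    linear_combination eqa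
  have e2 : bb^2 + B.a₂ * bb + B.a₄ = 0 := by
    apply mul_left_cancel₀ hbb
    linear_combination eqb
  have hb2 : B.a₂ = -(aa + bb) := by
    apply mul_left_cancel₀ (sub_ne_zero.mpr hab)
    linear_combination e1 - e2
  have hb4 : B.a₄ = aa * bb := by
    linear_combination e1 - aa * hb2
  have hQT : f₁ (0, 2) + f₁ (0, 2) = f₁ (0, 4) := by
    rw [← _root_.map_add, show ((0,2) : ZMod 2 × ZMod 8) + (0,2) = (0,4) by decide]
  have hPQ : f₁ (0, 1) + f₁ (0, 1) = f₁ (0, 2) := by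
    rw [← _root_.map_add, show ((0,1) : ZMod 2 × ZMod 8) + (0,1) = (0,2) by decide]
  have hQne : f₁ (0, 2) ≠ 0 := by
    intro hc
    have h9 : f₁ (0, 2) = f₁ 0 := by rw [_root_.map_zero]; exact hc
    exact absurd (hf₁ h9) (by decide)
  have hPne : f₁ (0, 1) ≠ 0 := by
    intro hc
    have h9 : f₁ (0, 1) = f₁ 0 := by rw [_root_.map_zero]; exact hc
    exact absurd (hf₁ h9) (by decide)
  obtain ⟨xQ, yQ, hnsQ, hQdef⟩ : ∃ x y h, f₁ (0, 2) = Point.some _ _ h := by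
    rcases hT : f₁ (0, 2) with _ | @⟨x, y, hns⟩
    · exact absurd hT hQne
    · exact ⟨x, y, hns, rfl⟩
  obtain ⟨xP, yP, hnsP, hPdef⟩ : ∃ x y h, f₁ (0, 1) = Point.some _ _ h := by
    rcases hT : f₁ (0, 1) with _ | @⟨x, y, hns⟩
    · exact absurd hT hPne
    · exact ⟨x, y, hns, rfl⟩
  have hyQ : yQ ≠ 0 := by
    intro hc
    subst hc
    have h2 := order_two_of_yzero hb1 hb3 hnsQ
    rw [← hQdef, hQT, hT₁] at h2
    exact some_ne_zero _ h2
  have hyP : yP ≠ 0 := by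
    intro hc
    subst hc
    have h2 := order_two_of_yzero hb1 hb3 hnsP
    rw [← hPdef, hPQ, hQdef] at h2
    exact some_ne_zero _ h2
  have haddP : Point.some _ _ hnsP + Point.some _ _ hnsP = Point.some _ _ hnsQ := by
    rw [← hPdef, ← hQdef]; exact hPQ
  have haddQ : Point.some _ _ hnsQ + Point.some _ _ hnsQ = Point.some _ _ h00 := by
    rw [← hQdef, ← hT₁]; exact hQT
  have DCP := double_coords hb1 hb3 hb2 hb4 hb6 hp2 hyP hnsP hnsQ haddP
  have DCQ := double_coords hb1 hb3 hb2 hb4 hb6 hp2 hyQ hnsQ h00 haddQ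
  have h2yQ : (2 : ZMod p) * yQ ≠ 0 := mul_ne_zero hp2 hyQ
  have h2yP : (2 : ZMod p) * yP ≠ 0 := mul_ne_zero hp2 hyP
  have hxQ2 : xQ^2 = aa * bb := by
    have h0 := DCQ.1
    rw [zero_mul] at h0
    have := pow_eq_zero_iff (by norm_num : (2:ℕ) ≠ 0) |>.mp h0.symm
    linear_combination this
  obtain ⟨w, hw⟩ := hm1
  have key_aa : aa * (2*yQ)^2 = (w * ((xQ - aa)^2 - aa*(aa - bb)))^2 := by
    linear_combination (((xQ - aa)^2 - aa*(aa - bb))^2) * hw - DCQ.2.1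
  obtain ⟨d0, hd0⟩ : ∃ d : ZMod p, aa = d^2 :=
    ⟨w * ((xQ - aa)^2 - aa*(aa - bb)) / (2*yQ), by
      rw [div_pow, eq_div_iff (pow_ne_zero 2 h2yQ)]
      linear_combination key_aa⟩
  have hd0ne : d0 ≠ 0 := by
    intro hc
    exact haa (by rw [hd0, hc]; ring)
  obtain ⟨c0, hc0⟩ : ∃ c : ZMod p, xQ = c^2 :=
    ⟨(xP^2 - aa*bb) / (2*yP), by
      rw [div_pow, eq_div_iff (pow_ne_zero 2 h2yP)]
      linear_combination DCP.1⟩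
  set lam := bb / aa with hlam
  have hlamne0 : lam ≠ 0 := div_ne_zero hbb haa
  have hlamne1 : lam ≠ 1 := by
    intro hc
    rw [hlam, div_eq_iff haa, one_mul] at hc
    exact hab hc.symm
  have hfourth : (c0 / d0)^4 = lam := by
    rw [hlam, div_pow, div_eq_div_iff (pow_ne_zero 4 hd0ne) haa]
    linear_combination aa * hxQ2 - (aa*(xQ + c0^2)) * hc0 + (bb*(aa + d0^2)) * hd0
  refine ⟨lam, hlamne0, hlamne1, ⟨c0 / d0, hfourth⟩, ?_, ?_⟩
  · rintro ⟨s, hs⟩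
    have hbigbb : bb = lam * aa := by rw [hlam]; field_simp
    have hβ2 : aa - bb = (w * s * d0)^2 := by
      linear_combination (-(1:ZMod p)) * hbigbb + (-aa) * hs + (s^2*d0^2) * hw + (-(s^2)) * hd0
    have hβne : w * s * d0 ≠ 0 := by
      intro hc
      apply hab
      have h0 : aa - bb = 0 := by rw [hβ2, hc]; ring
      linear_combination h0
    obtain ⟨β', hβ'2, hβ'ne, hαβ'⟩ : ∃ β', aa - bb = β'^2 ∧ β' ≠ 0 ∧ d0 + β' ≠ 0 := by
      by_cases hcase : d0 + w * s * d0 = 0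
      · refine ⟨-(w*s*d0), by rw [neg_pow]; simpa using hβ2, neg_ne_zero.mpr hβne, ?_⟩
        intro hc
        apply hd0ne
        have h2d : (2 : ZMod p) * d0 = 0 := by linear_combination hcase + hc
        rcases mul_eq_zero.mp h2d with h' | h'
        · exact absurd h' hp2
        · exact h'
      · exact ⟨w*s*d0, hβ2, hβne, hcase⟩
    obtain ⟨hR, hTa', hRR⟩ := halve hb1 hb3 hb2 hb4 hb6 hp2 d0 β' hd0ne hβ'ne hαβ' hd0
      (by linear_combination hd0 - hβ'2)
    have hQ2 : (2:ℤ) • Point.some _ _ hnsQ = Point.some _ _ h00 := by rw [two_zsmul]; exact haddQ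
    have hsame : Point.some _ _ hTa' = Point.some _ _ ha0 := some_eq_some rfl rfl
    have hR2 : (2:ℤ) • Point.some _ _ hR = Point.some _ _ ha0 := by rw [two_zsmul, hRR]
    have h4Q : (4:ℤ) • Point.some _ _ hnsQ = 0 := by
      rw [show (4:ℤ) = 2*2 by norm_num, mul_smul, hQ2, two_zsmul]
      exact order_two_of_yzero hb1 hb3 h00
    have h4R : (4:ℤ) • Point.some _ _ hR = 0 := by
      rw [show (4:ℤ) = 2*2 by norm_num, mul_smul, hR2, two_zsmul]
      exact order_two_of_yzero hb1 hb3 ha0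
    have hne1 : Point.some _ _ h00 ≠ (0 : B.toAffine.Point) := some_ne_zero _
    have hne2 : Point.some _ _ ha0 ≠ (0 : B.toAffine.Point) := some_ne_zero _
    have hne3 : Point.some _ _ h00 + Point.some _ _ ha0 ≠ (0 : B.toAffine.Point) := by
      rw [add_of_X_ne (Ne.symm haa)]
      exact some_ne_zero _
    apply h44
    refine ⟨((pointEquiv W C₀).toAddMonoidHom.comp
      ((pointEquiv A C₁).toAddMonoidHom.comp
        ((ZMod.lift 4 ⟨zmultiplesHom _ (Point.some _ _ hnsQ),
            by simpa [zmultiplesHom_apply] using h4Q⟩).coprod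
          (ZMod.lift 4 ⟨zmultiplesHom _ (Point.some _ _ hR),
            by simpa [zmultiplesHom_apply] using h4R⟩)))), ?_⟩
    intro u v huv
    simp only [AddMonoidHom.comp_apply, AddEquiv.coe_toAddMonoidHom] at huv
    have huv2 := (pointEquiv A C₁).injective ((pointEquiv W C₀).injective huv)
    have hker : ∀ m n : ZMod 4,
        ((ZMod.lift 4 ⟨zmultiplesHom _ (Point.some _ _ hnsQ),
            by simpa [zmultiplesHom_apply] using h4Q⟩).coprod
          (ZMod.lift 4 ⟨zmultiplesHom _ (Point.some _ _ hR),
            by simpa [zmultiplesHom_apply] using h4R⟩)) (m, n) = 0 → (m, n) = (0, 0) := by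
      rintro m n hmn
      have hm : ((m.val : ℤ) : ZMod 4) = m := by
        push_cast
        exact ZMod.natCast_rightInverse m
      have hn : ((n.val : ℤ) : ZMod 4) = n := by
        push_cast
        exact ZMod.natCast_rightInverse n
      rw [AddMonoidHom.coprod_apply, ← hm, ← hn, ZMod.lift_coe, ZMod.lift_coe] at hmn
      obtain ⟨hj, hk⟩ := no44 hQ2 hR2 h4Q h4R hne1 hne2 hne3 (m.val) (n.val)
        (Int.ofNat_nonneg _) (by exact_mod_cast ZMod.val_lt m)
        (Int.ofNat_nonneg _) (by exact_mod_cast ZMod.val_lt n) hmn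
      have hm0 : m = 0 := by rw [← hm, hj]; simp
      have hn0 : n = 0 := by rw [← hn, hk]; simp
      rw [hm0, hn0]
    obtain ⟨mu, nu⟩ := u
    obtain ⟨mv, nv⟩ := v
    have : (mu - mv, nu - nv) = ((0 : ZMod 4), (0 : ZMod 4)) := by
      apply hker
      rw [show ((mu - mv, nu - nv) : ZMod 4 × ZMod 4) = (mu, nu) - (mv, nv) from rfl, _root_.map_sub,
        huv2, sub_self]
    have h1' : mu - mv = 0 := congrArg Prod.fst this
    have h2' : nu - nv = 0 := congrArg Prod.snd this
    have : mu = mv := by linear_combination h1'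
    have h2'' : nu = nv := by linear_combination h2'
    simp [this, h2'']
  · refine ⟨(⟨Units.mk0 d0 hd0ne, 0, 0, 0⟩ :
      WeierstrassCurve.VariableChange (ZMod p)) * (C₁ * C₀), ?_⟩
    rw [mul_smul, mul_smul, ← hA, ← hB]
    refine WeierstrassCurve.ext ?_ ?_ ?_ ?_ ?_
    · rw [variableChange_a₁, hb1]
      show _ * (0 + 2 * 0) = (0 : ZMod p)
      ring
    · rw [variableChange_a₂, hb1, hb2]
      simp only [Units.val_inv_eq_inv_val, Units.val_mk0, legendreCurve]
      rw [hlam, hd0]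
      field_simp
      ring
    · rw [variableChange_a₃, hb1, hb3]
      show _ * (0 + _ * 0 + 2 * 0) = (0 : ZMod p)
      ring
    · rw [variableChange_a₄, hb1, hb3, hb4]
      simp only [Units.val_inv_eq_inv_val, Units.val_mk0, legendreCurve]
      rw [hlam, hd0]
      field_simp
      ring
    · rw [variableChange_a₆, hb1, hb3, hb4, hb6]
      show _ * (0 + 0 * (aa * bb) + 0 ^ 2 * _ + 0 ^ 3 - 0 * 0 - 0 ^ 2 - 0 * 0 * 0) = (0 : ZMod p)
      ring
end

section
/- Let p be an odd prime, s an integer with s^2 < 4p and s \equiv p + 1 (mod 8), and write s^2 - 4p = t^2 D with D a fundamental discriminant of an imaginary quadratic field. Let a = ord_2(t). Then: (i) if p \equiv 1 (mod 8) and D is odd, then a > 2; (ii) if p \equiv 5 (mod 8) and D is odd, then a = 2; (iii) if p \equiv 5 (mod 8) and D is even, then a < 2. -/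
/-- `D` is a fundamental discriminant of an imaginary (or real) quadratic field:
either `D ≡ 1 (mod 4)` and squarefree, or `D = 4m` with `m` squarefree and
`m ≡ 2` or `3 (mod 4)`. -/
def IsFundamentalDiscriminant (D : ℤ) : Prop :=
  (D % 4 = 1 ∧ Squarefree D) ∨
    ∃ m : ℤ, D = 4 * m ∧ Squarefree m ∧ (m % 4 = 2 ∨ m % 4 = 3)

lemma le_of_pow2_dvd {x : ℤ} (hx : Odd x) {m n : ℕ} (h : (2:ℤ)^n ∣ 2^m * x) : n ≤ m := by
  obtain ⟨k, rfl⟩ := hx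
  have hc0 : IsCoprime (2:ℤ) (2*k+1) := ⟨-k, 1, by ring⟩
  have h2 : (2:ℤ)^n ∣ 2^m := (hc0.pow_left).dvd_of_dvd_mul_right h
  exact (pow_dvd_pow_iff (by norm_num : (2:ℤ) ≠ 0) (by decide : ¬IsUnit (2:ℤ))).mp h2

lemma eq_of_pow2_mul_eq {x y : ℤ} (hx : Odd x) (hy : Odd y) {m n : ℕ}
    (h : (2:ℤ)^m * x = 2^n * y) : m = n :=
  le_antisymm (le_of_pow2_dvd hy (h ▸ Dvd.intro x rfl)) (le_of_pow2_dvd hx (h ▸ Dvd.intro y rfl))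

lemma decomp_t (t : ℕ) (ht : 0 < t) :
    ∃ u : ℤ, Odd u ∧ (t : ℤ) = 2 ^ (padicValNat 2 t) * u := by
  have ht0 : t ≠ 0 := ht.ne'
  have h1 := Nat.ordProj_mul_ordCompl_eq_self t 2
  have h2 := Nat.not_dvd_ordCompl Nat.prime_two ht0
  have h3 : t.factorization 2 = padicValNat 2 t := Nat.factorization_def t Nat.prime_two
  refine ⟨(t / 2 ^ (t.factorization 2) : ℕ), ?_, ?_⟩
  · have hood : Odd (t / 2 ^ t.factorization 2) := Nat.odd_iff.mpr (by omega)
    exact_mod_cast hood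
  · rw [← h3]
    exact_mod_cast (congrArg (Nat.cast : ℕ → ℤ) h1).symm

theorem stmt_17 (p : ℕ) (hp : p.Prime) (hodd : Odd p) (s : ℤ) (hs : s ^ 2 < 4 * p)
    (hcong : s % 8 = ((p : ℤ) + 1) % 8) (t : ℕ) (ht : 0 < t) (D : ℤ)
    (hD : IsFundamentalDiscriminant D) (heq : s ^ 2 - 4 * p = (t : ℤ) ^ 2 * D) :
    (p % 8 = 1 → Odd D → 2 < padicValNat 2 t) ∧
      (p % 8 = 5 → Odd D → padicValNat 2 t = 2) ∧
      (p % 8 = 5 → Even D → padicValNat 2 t < 2) := by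
  obtain ⟨u, hu, htu⟩ := decomp_t t ht
  set a := padicValNat 2 t with ha
  have heq2 : s ^ 2 - 4 * (p:ℤ) = 2 ^ (2 * a) * (u ^ 2 * D) := by
    rw [heq, htu]; ring
  refine ⟨?_, ?_, ?_⟩
  · intro hp1 hDodd
    have hpZ : (p : ℤ) % 8 = 1 := by omega
    have hs8 : s % 8 = 2 := by omega
    obtain ⟨k, hk⟩ : ∃ k : ℤ, s = 8 * k + 2 := ⟨s / 8, by omega⟩
    obtain ⟨j, hj⟩ : ∃ j : ℤ, (p:ℤ) = 8 * j + 1 := ⟨(p:ℤ) / 8, by omega⟩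
    have hkey : (2:ℤ) ^ 5 ∣ 2 ^ (2 * a) * (u ^ 2 * D) := by
      rw [← heq2, hk, hj]
      exact ⟨2 * k ^ 2 + k - j, by ring⟩
    have := le_of_pow2_dvd ((hu.pow).mul hDodd) hkey
    omega
  · intro hp5 hDodd
    have hpZ : (p : ℤ) % 8 = 5 := by omega
    have hs8 : s % 8 = 6 := by omega
    obtain ⟨k, hk⟩ : ∃ k : ℤ, s = 8 * k + 6 := ⟨s / 8, by omega⟩
    obtain ⟨j, hj⟩ : ∃ j : ℤ, (p:ℤ) = 8 * j + 5 := ⟨(p:ℤ) / 8, by omega⟩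
    have hkey : (2:ℤ) ^ (2 * a) * (u ^ 2 * D) = 2 ^ 4 * (4 * k ^ 2 + 6 * k + 1 - 2 * j) := by
      rw [← heq2, hk, hj]; ring
    have := eq_of_pow2_mul_eq ((hu.pow).mul hDodd) ⟨2 * k ^ 2 + 3 * k - j, by ring⟩ hkey
    omega
  · intro hp5 hDeven
    have hpZ : (p : ℤ) % 8 = 5 := by omega
    have hs8 : s % 8 = 6 := by omega
    obtain ⟨k, hk⟩ : ∃ k : ℤ, s = 8 * k + 6 := ⟨s / 8, by omega⟩
    obtain ⟨j, hj⟩ : ∃ j : ℤ, (p:ℤ) = 8 * j + 5 := ⟨(p:ℤ) / 8, by omega⟩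
    rcases hD with ⟨hD1, _⟩ | ⟨m, rfl, _, hm⟩
    · exfalso
      have := Int.even_iff.mp hDeven
      omega
    rcases hm with hm2 | hm3
    · -- m ≡ 2 mod 4 : contradiction
      obtain ⟨q, hq⟩ : ∃ q : ℤ, m = 4 * q + 2 := ⟨m / 4, by omega⟩
      have hkey : (2:ℤ) ^ (2 * a + 3) * (u ^ 2 * (2 * q + 1)) =
          2 ^ 4 * (4 * k ^ 2 + 6 * k + 1 - 2 * j) := by
        have := heq2
        rw [hk, hj, hq] at this
        linear_combination -this
      have := eq_of_pow2_mul_eq ((hu.pow).mul ⟨q, by ring⟩)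
        ⟨2 * k ^ 2 + 3 * k - j, by ring⟩ hkey
      omega
    · obtain ⟨q, hq⟩ : ∃ q : ℤ, m = 4 * q + 3 := ⟨m / 4, by omega⟩
      have hkey : (2:ℤ) ^ (2 * a + 2) * (u ^ 2 * m) =
          2 ^ 4 * (4 * k ^ 2 + 6 * k + 1 - 2 * j) := by
        have := heq2
        rw [hk, hj] at this
        linear_combination -this
      have := eq_of_pow2_mul_eq ((hu.pow).mul ⟨2*q+1, by omega⟩)
        ⟨2 * k ^ 2 + 3 * k - j, by ring⟩ hkey
      omega
end

section
/- Let p be an odd prime with p \equiv 3 (mod 4), and let \phi be the quadratic character and \epsilon the trivial character of F_p. Then the normalized finite field hypergeometric value 4F3(\phi, \phi, \phi, \phi; \epsilon, \epsilon, \epsilon | -1)_p, defined via Gauss sums as (1/(p-1)) \sum_{\chi} (g(\phi\chi)/g(\phi))^4 (g(\bar{\chi})/g(\bar{\epsilon}))^3 g(\bar{\chi}) \chi(-1)^4 \chi(-1), equals 0. -/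
theorem stmt_19 (p : ℕ) [Fact p.Prime] (hp : p % 4 = 3)
    (θ : AddChar (ZMod p) ℂ) (hθ : θ ≠ 1)
    (φ : MulChar (ZMod p) ℂ)
    (hφ : φ = (quadraticChar (ZMod p)).ringHomComp (Int.castRingHom ℂ)) :
    (1 / ((p : ℂ) - 1)) *
        ∑ᶠ χ : MulChar (ZMod p) ℂ,
          (gaussSum (φ * χ) θ / gaussSum φ θ) ^ 4 *
            (gaussSum χ⁻¹ θ / gaussSum ((1 : MulChar (ZMod p) ℂ))⁻¹ θ) ^ 3 *
            gaussSum χ⁻¹ θ * χ (-1) ^ 4 * χ (-1) = 0 := by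
  have hq : φ.IsQuadratic := by
    rw [hφ]
    exact (quadraticChar_isQuadratic (ZMod p)).comp _
  have hφ2 : φ * φ = 1 := by
    have := hq.sq_eq_one; rwa [sq] at this
  have hφinv : φ⁻¹ = φ := hq.inv
  have hp2 : p % 2 = 1 := by omega
  have hφneg : φ (-1) = -1 := by
    have hrc : ringChar (ZMod p) ≠ 2 := by
      rw [ZMod.ringChar_zmod_n]; omega
    have h1 : quadraticChar (ZMod p) (-1) = ZMod.χ₄ (Fintype.card (ZMod p)) :=
      quadraticChar_neg_one hrc
    rw [ZMod.card] at h1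
    have h2 : ZMod.χ₄ (p : ℕ) = -1 := by
      rw [ZMod.χ₄_nat_eq_if_mod_four, hp2, hp]
      norm_num
    rw [hφ, MulChar.ringHomComp_apply, h1, h2]
    norm_num
  set F : MulChar (ZMod p) ℂ → ℂ := fun χ =>
    (gaussSum (φ * χ) θ / gaussSum φ θ) ^ 4 *
      (gaussSum χ⁻¹ θ / gaussSum ((1 : MulChar (ZMod p) ℂ))⁻¹ θ) ^ 3 *
      gaussSum χ⁻¹ θ * χ (-1) ^ 4 * χ (-1) with hF
  have hinvol : Function.Involutive (fun χ : MulChar (ZMod p) ℂ => φ * χ⁻¹) := by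
    intro χ
    simp only [mul_inv, hφinv, inv_inv, ← mul_assoc, hφ2, one_mul]
  have hkey : ∀ χ : MulChar (ZMod p) ℂ, F (φ * χ⁻¹) = -F χ := by
    intro χ
    have e1 : φ * (φ * χ⁻¹) = χ⁻¹ := by rw [← mul_assoc, hφ2, one_mul]
    have e2 : (φ * χ⁻¹)⁻¹ = φ * χ := by rw [mul_inv, hφinv, inv_inv]
    have e3 : (φ * χ⁻¹) (-1) = -χ (-1) := by
      rw [MulChar.mul_apply, MulChar.inv_apply', inv_neg, inv_one, hφneg]
      ring
    simp only [hF, e1, e2, e3]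
    ring
  have hS : ∑ᶠ χ : MulChar (ZMod p) ℂ, F χ = 0 := by
    have h1 : ∑ᶠ χ : MulChar (ZMod p) ℂ, F χ
        = ∑ᶠ χ : MulChar (ZMod p) ℂ, F (φ * χ⁻¹) := by
      exact (finsum_comp_equiv hinvol.toPerm).symm
    have h2 : ∑ᶠ χ : MulChar (ZMod p) ℂ, F (φ * χ⁻¹)
        = ∑ᶠ χ : MulChar (ZMod p) ℂ, -F χ := finsum_congr hkey
    rw [h2, finsum_neg_distrib] at h1
    have h3 : (2 : ℂ) * ∑ᶠ χ : MulChar (ZMod p) ℂ, F χ = 0 := by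
      linear_combination h1
    exact (mul_eq_zero.mp h3).resolve_left two_ne_zero
  calc (1 / ((p : ℂ) - 1)) * ∑ᶠ χ : MulChar (ZMod p) ℂ, F χ
      = (1 / ((p : ℂ) - 1)) * 0 := by rw [hS]
    _ = 0 := mul_zero _
end
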